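/- arXiv:2401.15786 — 7 statements merged into one kernel-verified Lean document; each statement's English description precedes it below -/
import Mathlib

section
/- Let (G,*) be a groupoid satisfying the identities x*y = y*x and w*(x*(y*z)) = w*((x*y)*z). Then for every n ≥ 2, the number of distinct n-ary operations induced on G by full linear terms over x_1,…,x_n is at most 2^{n-1} − 1, and the number induced by bracketings of x_1 ⋯ x_n is at most n − 1. -/
/-- Terms (fully parenthesized products) over variables `x_1,…,x_n`. -/
inductive Term (n : ℕ) : Type
  | var : Fin n → Term n
  | mul : Term n → Term n → Term n

namespace Term

variable {n : ℕ} {G : Type*}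

/-- Evaluation of a term in a groupoid `(G, op)` under an assignment `h`. -/
def eval (op : G → G → G) (h : Fin n → G) : Term n → G
  | var i => h i
  | mul s t => op (eval op h s) (eval op h t)

/-- The list of variable indices at the leaves, from left to right. -/
def leaves : Term n → List (Fin n)
  | var i => [i]
  | mul s t => leaves s ++ leaves t

/-- The leftmost variable of a term. -/
def leftVar : Term n → Fin n
  | var i => i
  | mul s _ => leftVar s

/-- The factors `t_1, …, t_m` of the leftmost decomposition `t = [t_0, t_1, …, t_m]`. -/
def lmFactors : Term n → List (Term n)
  | var _ => []
  | mul s t => lmFactors s ++ [t]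

/-- The left depth of the leftmost leaf of a term. -/
def leftDepth : Term n → ℕ
  | var _ => 0
  | mul s _ => leftDepth s + 1

/-- A bracketing of the word `x_1 x_2 ⋯ x_n`. -/
def IsBracketing (t : Term n) : Prop := t.leaves = List.finRange n

/-- A full linear term over `x_1, …, x_n`: each variable occurs exactly once. -/
def IsLinear (t : Term n) : Prop := t.leaves.Perm (List.finRange n)

end Term

/-- Leftmost bracketing `[t_0, t_1, …, t_m]`. -/
def lmBr {n : ℕ} (t0 : Term n) (l : List (Term n)) : Term n := l.foldl Term.mul t0

/-- Leftmost bracketing of variables `[x_i, x_{j_1}, …, x_{j_k}]`. -/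
def lBr {n : ℕ} (i : Fin n) (l : List (Fin n)) : Term n :=
  l.foldl (fun s j => Term.mul s (Term.var j)) (Term.var i)

/-- Rightmost bracketing of variables `⟨x_i, x_{j_1}, …, x_{j_k}⟩`. -/
def rmBr {n : ℕ} (i : Fin n) : List (Fin n) → Term n
  | [] => Term.var i
  | j :: l => Term.mul (Term.var i) (rmBr j l)

/-- `n`-th term of the associative spectrum: the number of distinct `n`-ary operations
induced by bracketings of `x_1 ⋯ x_n`. -/
noncomputable def assocSpec {G : Type*} (op : G → G → G) (n : ℕ) : ℕ :=
  Set.ncard {f : (Fin n → G) → G | ∃ t : Term n, t.IsBracketing ∧ f = fun h => t.eval op h}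

/-- `n`-th term of the ac-spectrum: the number of distinct `n`-ary operations
induced by full linear terms over `x_1, …, x_n`. -/
noncomputable def acSpec {G : Type*} (op : G → G → G) (n : ℕ) : ℕ :=
  Set.ncard {f : (Fin n → G) → G | ∃ t : Term n, t.IsLinear ∧ f = fun h => t.eval op h}
/-- Bell numbers. -/
def bell : ℕ → ℕ
  | 0 => 1
  | n + 1 => ∑ k : Fin (n + 1), Nat.choose n k * bell k
  decreasing_by exact k.isLt

/-- Ordered Bell (Fubini) numbers. -/
def fubini : ℕ → ℕ
  | 0 => 1
  | n + 1 => ∑ k : Fin (n + 1), Nat.choose (n + 1) k * fubini k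
  decreasing_by exact k.isLt

/-- Number of partitions of an `n`-set into blocks of size at most 2. -/
def bell2 : ℕ → ℕ
  | 0 => 1
  | 1 => 1
  | n + 2 => bell2 (n + 1) + (n + 1) * bell2 n

/-- The set of egg-pairs of (maximal nests of) a term. -/
def Term.eggs {n : ℕ} : Term n → Finset (Finset (Fin n))
  | .var _ => ∅
  | .mul (.var i) (.var j) => {({i, j} : Finset (Fin n))}
  | .mul s t => Term.eggs s ∪ Term.eggs t


namespace SpecAux

variable {G : Type*} (op : G → G → G)

def rcg : G → List G → G
  | a, [] => a
  | a, b :: l => op a (rcg b l)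

def Req (a b : G) : Prop := ∀ w, op w a = op w b

variable {op}

theorem Req.rfl {a : G} : Req op a a := fun _ => _root_.rfl

theorem Req.trans {a b c : G} (h1 : Req op a b) (h2 : Req op b c) : Req op a c :=
  fun w => (h1 w).trans (h2 w)

theorem Req.symm {a b : G} (h : Req op a b) : Req op b a := fun w => (h w).symm

theorem Req.of_eq {a b : G} (h : a = b) : Req op a b := by subst h; exact .rfl

variable (hcomm : ∀ x y : G, op x y = op y x)
variable (hid : ∀ w x y z : G, op w (op x (op y z)) = op w (op (op x y) z))

include hcomm in
theorem req_mul {a a' b b' : G} (ha : Req op a a') (hb : Req op b b') :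
    op a b = op a' b' := by
  have h1 : op a b = op a' b := by rw [hcomm a b, ha b, hcomm]
  rw [h1, hb a']

include hcomm in
theorem Req.congr {a a' b b' : G} (ha : Req op a a') (hb : Req op b b') :
    Req op (op a b) (op a' b') := fun w => by rw [req_mul hcomm ha hb]

include hid in
theorem req_assoc (a b c : G) : Req op (op a (op b c)) (op (op a b) c) :=
  fun w => hid w a b c

include hcomm hid in
theorem rcg_append : ∀ (l : List G) (a b : G) (m : List G),
    Req op (op (rcg op a l) (rcg op b m)) (rcg op a (l ++ b :: m))
  | [], _, _, _ => .rfl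
  | c :: l, a, b, m => by
    show Req op (op (op a (rcg op c l)) (rcg op b m)) (op a (rcg op c (l ++ b :: m)))
    exact (req_assoc hid a _ _).symm.trans
      (Req.congr hcomm .rfl (rcg_append l c b m))

include hcomm hid in
theorem req_head_swap : ∀ (l : List G) (a b : G),
    Req op (rcg op a (b :: l)) (rcg op b (a :: l))
  | [], a, b => Req.of_eq (hcomm a b)
  | c :: l, a, b => by
    show Req op (op a (op b (rcg op c l))) (op b (op a (rcg op c l)))
    exact (req_assoc hid a b _).trans <| (Req.of_eq (by rw [hcomm a b])).trans
      (req_assoc hid b a _).symm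

include hcomm hid in
theorem req_tail_perm {l l' : List G} (h : l.Perm l') :
    ∀ a, Req op (rcg op a l) (rcg op a l') := by
  induction h with
  | nil => exact fun _ => .rfl
  | cons x _ ih =>
    intro a
    exact Req.congr hcomm .rfl (ih x)
  | swap x y l =>
    intro a
    exact Req.congr hcomm .rfl (req_head_swap hcomm hid l y x)
  | trans _ _ ih1 ih2 => exact fun a => (ih1 a).trans (ih2 a)

include hcomm hid in
theorem req_move : ∀ (u : List G) (a b : G) (v : List G),
    Req op (rcg op a (u ++ b :: v)) (rcg op b (a :: (u ++ v)))
  | [], a, b, v => req_head_swap hcomm hid v a b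
  | c :: u, a, b, v => by
    show Req op (op a (rcg op c (u ++ b :: v))) (op b (op a (rcg op c (u ++ v))))
    refine (Req.congr hcomm .rfl (req_move u c b v)).trans ?_
    show Req op (op a (op b (rcg op c (u ++ v)))) (op b (op a (rcg op c (u ++ v))))
    exact (req_assoc hid a b _).trans <| (Req.of_eq (by rw [hcomm a b])).trans
      (req_assoc hid b a _).symm

include hcomm hid in
theorem req_perm {a : G} {l : List G} {b : G} {m : List G}
    (h : (a :: l).Perm (b :: m)) : Req op (rcg op a l) (rcg op b m) := by
  by_cases hab : a = b
  · subst hab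
    exact req_tail_perm hcomm hid h.cons_inv a
  · have hb : b ∈ l := by
      rcases List.mem_cons.mp (h.symm.subset List.mem_cons_self) with h' | h'
      · exact absurd h'.symm hab
      · exact h'
    obtain ⟨u, v, rfl⟩ := List.append_of_mem hb
    have h2 : (a :: (u ++ v)).Perm m := by
      have hperm : (b :: (a :: (u ++ v))).Perm (b :: m) :=
        ((List.Perm.swap a b (u ++ v)).trans
          ((List.perm_middle).symm.cons a)).trans h
      exact hperm.cons_inv
    exact (req_move hcomm hid u a b v).trans (req_tail_perm hcomm hid h2 b)

theorem leaves_ne_nil {n : ℕ} : ∀ t : Term n, t.leaves ≠ []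
  | .var i => by simp [Term.leaves]
  | .mul s t => by simp [Term.leaves, leaves_ne_nil s]

include hcomm hid in
theorem flatten {n : ℕ} (h : Fin n → G) (t : Term n) :
    ∀ {a : G} {l : List G}, t.leaves.map h = a :: l → Req op (t.eval op h) (rcg op a l) := by
  induction t with
  | var i =>
    intro a l hl
    simp [Term.leaves] at hl
    obtain ⟨rfl, rfl⟩ := hl
    exact .rfl
  | mul s u ihs ihu =>
    intro a l hl
    obtain ⟨a₁, l₁, hs⟩ := List.exists_cons_of_ne_nil
      (fun hnil => leaves_ne_nil s (List.map_eq_nil_iff.mp hnil))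
    obtain ⟨b₁, l₂, hu⟩ := List.exists_cons_of_ne_nil
      (fun hnil => leaves_ne_nil u (List.map_eq_nil_iff.mp hnil))
    have hl' : (Term.mul s u).leaves.map h = a₁ :: (l₁ ++ b₁ :: l₂) := by
      show (s.leaves ++ u.leaves).map h = _
      rw [List.map_append, hs, hu]
      rfl
    rw [hl'] at hl
    obtain ⟨rfl, rfl⟩ : a₁ = a ∧ l₁ ++ b₁ :: l₂ = l := by
      exact ⟨(List.cons.injEq _ _ _ _ ▸ hl).1, (List.cons.injEq _ _ _ _ ▸ hl).2⟩
    exact (Req.congr hcomm (ihs hs) (ihu hu)).trans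
      (rcg_append hcomm hid l₁ a₁ b₁ l₂)

variable (op) in
def PL {n : ℕ} (g0 : G) (h : Fin n → G) : List (Fin n) → G
  | [] => g0
  | i :: l => rcg op (h i) (l.map h)

include hcomm hid in
theorem req_PL {n : ℕ} (g0 : G) (h : Fin n → G) {l l' : List (Fin n)}
    (hp : l.Perm l') (hl : l ≠ []) :
    Req op (PL op g0 h l) (PL op g0 h l') := by
  cases l with
  | nil => exact absurd rfl hl
  | cons i l =>
    cases l' with
    | nil => exact absurd hp.symm (by simp)
    | cons j l' =>
      show Req op (rcg op (h i) (l.map h)) (rcg op (h j) (l'.map h))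
      have := hp.map h
      simp only [List.map_cons] at this
      exact req_perm hcomm hid this

include hcomm hid in
theorem eval_eq_PL {n : ℕ} (g0 : G) (h : Fin n → G) (s u : Term n) :
    (Term.mul s u).eval op h = op (PL op g0 h s.leaves) (PL op g0 h u.leaves) := by
  obtain ⟨i, ls, hs⟩ := List.exists_cons_of_ne_nil (leaves_ne_nil s)
  obtain ⟨j, lu, hu⟩ := List.exists_cons_of_ne_nil (leaves_ne_nil u)
  have hs' : s.leaves.map h = h i :: ls.map h := by rw [hs]; rfl
  have hu' : u.leaves.map h = h j :: lu.map h := by rw [hu]; rfl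
  have heq : (Term.mul s u).eval op h
      = op (rcg op (h i) (ls.map h)) (rcg op (h j) (lu.map h)) :=
    req_mul hcomm (flatten hcomm hid h s hs') (flatten hcomm hid h u hu')
  rw [heq, hs, hu]
  rfl

end SpecAux

/-- Bounds for groupoids satisfying `xy ≈ yx` and `w(x(yz)) ≈ w((xy)z)`. -/
theorem spec_bounds_comm {G : Type*} (op : G → G → G)
    (hcomm : ∀ x y : G, op x y = op y x)
    (hid : ∀ w x y z : G, op w (op x (op y z)) = op w (op (op x y) z))
    (n : ℕ) (hn : 2 ≤ n) :
    acSpec op n ≤ 2 ^ (n - 1) - 1 ∧ assocSpec op n ≤ n - 1 := by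
  classical
  haveI : NeZero n := ⟨by omega⟩
  have hpow : 2 ≤ 2 ^ (n - 1) := by
    calc 2 = 2 ^ 1 := rfl
    _ ≤ 2 ^ (n - 1) := Nat.pow_le_pow_right (by norm_num) (by omega)
  by_cases hG : Nonempty G
  · obtain ⟨g0⟩ := hG
    constructor
    · -- ac-spectrum bound
      set D : Finset (Finset (Fin n)) :=
        Finset.univ.filter (fun A : Finset (Fin n) => (0 : Fin n) ∈ A ∧ A ≠ Finset.univ)
        with hD
      set Φ : Finset (Fin n) → ((Fin n → G) → G) := fun A h =>
        op (SpecAux.PL op g0 h (A.sort (· ≤ ·))) (SpecAux.PL op g0 h (Aᶜ.sort (· ≤ ·)))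
        with hΦ
      have hsub : {f : (Fin n → G) → G | ∃ t : Term n, t.IsLinear ∧ f = fun h => t.eval op h}
          ⊆ Φ '' ↑D := by
        rintro f ⟨t, ht, rfl⟩
        match t with
        | .var i =>
          exfalso
          have := ht.length_eq
          simp [Term.leaves] at this
          omega
        | .mul s u =>
          have hlin : (s.leaves ++ u.leaves).Perm (List.finRange n) := ht
          have hnd : (s.leaves ++ u.leaves).Nodup := hlin.nodup_iff.mpr (List.nodup_finRange n)
          rw [List.nodup_append] at hnd
          obtain ⟨hnds, hndu, hdisj⟩ := hnd
          have hcover : ∀ x : Fin n, x ∈ s.leaves ∨ x ∈ u.leaves := by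
            intro x
            have hx : x ∈ s.leaves ++ u.leaves := hlin.mem_iff.mpr (List.mem_finRange x)
            simpa using hx
          set A₀ : Finset (Fin n) := s.leaves.toFinset with hA₀
          have hAc : u.leaves.toFinset = A₀ᶜ := by
            ext x
            simp only [List.mem_toFinset, Finset.mem_compl, hA₀]
            constructor
            · intro hx hx'
              exact hdisj x hx' x hx rfl
            · intro hx
              rcases hcover x with h' | h'
              · exact absurd h' hx
              · exact h'
          have hspermS : s.leaves.Perm (A₀.sort (· ≤ ·)) :=
            ((Finset.sort_perm_toList A₀ (· ≤ ·)).trans (List.toFinset_toList hnds)).symm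
          have hspermU : u.leaves.Perm ((A₀ᶜ).sort (· ≤ ·)) := by
            rw [← hAc]
            exact ((Finset.sort_perm_toList _ (· ≤ ·)).trans (List.toFinset_toList hndu)).symm
          have hfun : ∀ h : Fin n → G, (Term.mul s u).eval op h = Φ A₀ h := by
            intro h
            rw [SpecAux.eval_eq_PL hcomm hid g0 h s u]
            exact SpecAux.req_mul hcomm
              (SpecAux.req_PL hcomm hid g0 h hspermS (SpecAux.leaves_ne_nil s))
              (SpecAux.req_PL hcomm hid g0 h hspermU (SpecAux.leaves_ne_nil u))
          have hsne : A₀.Nonempty := by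
            obtain ⟨i, ls, hs⟩ := List.exists_cons_of_ne_nil (SpecAux.leaves_ne_nil s)
            exact ⟨i, by simp [hA₀, hs]⟩
          have hune : A₀ᶜ.Nonempty := by
            obtain ⟨j, lu, hu⟩ := List.exists_cons_of_ne_nil (SpecAux.leaves_ne_nil u)
            exact ⟨j, by rw [← hAc]; simp [hu]⟩
          have hA₀neU : A₀ ≠ Finset.univ := by
            intro hEq
            rw [hEq, Finset.compl_univ] at hune
            exact Finset.not_nonempty_empty hune
          have hA₀cneU : A₀ᶜ ≠ Finset.univ := by
            intro hEq
            have : A₀ = ∅ := by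
              have := congrArg (fun X => Xᶜ) hEq
              simpa using this
            rw [this] at hsne
            exact Finset.not_nonempty_empty hsne
          by_cases h0 : (0 : Fin n) ∈ A₀
          · refine ⟨A₀, ?_, ?_⟩
            · simp only [hD, Finset.coe_filter, Finset.mem_univ, true_and, Set.mem_setOf_eq]
              exact ⟨h0, hA₀neU⟩
            · exact funext fun h => (hfun h).symm
          · refine ⟨A₀ᶜ, ?_, ?_⟩
            · simp only [hD, Finset.coe_filter, Finset.mem_univ, true_and, Set.mem_setOf_eq]
              exact ⟨Finset.mem_compl.mpr h0, hA₀cneU⟩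
            · funext h
              have : Φ A₀ᶜ h = Φ A₀ h := by
                simp only [hΦ, compl_compl]
                exact hcomm _ _
              rw [this]
              exact (hfun h).symm
      have hcard : D.card ≤ 2 ^ (n - 1) - 1 := by
        have hmem : Finset.univ.erase (0 : Fin n) ∈ (Finset.univ.erase (0 : Fin n)).powerset :=
          Finset.mem_powerset_self _
        have hinj : D.card ≤
            ((Finset.univ.erase (0 : Fin n)).powerset.erase (Finset.univ.erase 0)).card := by
          apply Finset.card_le_card_of_injOn (fun A => A.erase 0)
          · intro A hA
            simp only [hD, Finset.coe_filter, Finset.mem_filter, Finset.mem_univ, true_and, Set.mem_setOf_eq] at hA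
            obtain ⟨h0, hne⟩ := hA
            rw [Finset.mem_coe, Finset.mem_erase]
            refine ⟨?_, Finset.mem_powerset.mpr (Finset.erase_subset_erase _ (Finset.subset_univ A))⟩
            intro hEq
            apply hne
            calc A = insert (0 : Fin n) (A.erase 0) := (Finset.insert_erase h0).symm
              _ = insert (0 : Fin n) (Finset.univ.erase 0) := by rw [show A.erase 0 = _ from hEq]
              _ = Finset.univ := Finset.insert_erase (Finset.mem_univ _)
          · intro A hA B hB hAB
            simp only [hD, Finset.coe_filter, Finset.mem_univ, true_and, Set.mem_setOf_eq] at hA hB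
            rw [← Finset.insert_erase hA.1, ← Finset.insert_erase hB.1]
            simp only at hAB
            rw [hAB]
        have hE : ((Finset.univ.erase (0 : Fin n)).powerset.erase (Finset.univ.erase 0)).card
            = 2 ^ (n - 1) - 1 := by
          rw [Finset.card_erase_of_mem hmem, Finset.card_powerset,
            Finset.card_erase_of_mem (Finset.mem_univ _), Finset.card_univ, Fintype.card_fin]
        omega
      calc acSpec op n
          ≤ (Φ '' ↑D).ncard := Set.ncard_le_ncard hsub ((D.finite_toSet).image Φ)
        _ ≤ (↑D : Set (Finset (Fin n))).ncard := Set.ncard_image_le D.finite_toSet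
        _ = D.card := Set.ncard_coe_finset D
        _ ≤ 2 ^ (n - 1) - 1 := hcard
    · -- associative spectrum bound
      set Ψ : ℕ → ((Fin n → G) → G) := fun k h =>
        op (SpecAux.PL op g0 h ((List.finRange n).take k))
          (SpecAux.PL op g0 h ((List.finRange n).drop k)) with hΨ
      have hsub : {f : (Fin n → G) → G | ∃ t : Term n, t.IsBracketing ∧ f = fun h => t.eval op h}
          ⊆ Ψ '' ↑(Finset.Ico 1 n) := by
        rintro f ⟨t, ht, rfl⟩
        match t with
        | .var i =>
          exfalso
          have := congrArg List.length ht
          simp [Term.leaves] at this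
          omega
        | .mul s u =>
          have hb : s.leaves ++ u.leaves = List.finRange n := ht
          have hlen : s.leaves.length + u.leaves.length = n := by
            have := congrArg List.length hb
            simpa using this
          have hs1 : 0 < s.leaves.length := List.length_pos_iff.mpr (SpecAux.leaves_ne_nil s)
          have hu1 : 0 < u.leaves.length := List.length_pos_iff.mpr (SpecAux.leaves_ne_nil u)
          refine ⟨s.leaves.length, ?_, ?_⟩
          · simp only [Finset.coe_Ico, Set.mem_Ico]
            omega
          · funext h
            have htake : (List.finRange n).take s.leaves.length = s.leaves := by
              rw [← hb]; exact List.take_left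
            have hdrop : (List.finRange n).drop s.leaves.length = u.leaves := by
              rw [← hb]; exact List.drop_left
            simp only [hΨ, htake, hdrop]
            exact (SpecAux.eval_eq_PL hcomm hid g0 h s u).symm
      calc assocSpec op n
          ≤ (Ψ '' ↑(Finset.Ico 1 n)).ncard :=
            Set.ncard_le_ncard hsub (((Finset.Ico 1 n).finite_toSet).image Ψ)
        _ ≤ (↑(Finset.Ico 1 n) : Set ℕ).ncard := Set.ncard_image_le (Finset.Ico 1 n).finite_toSet
        _ = (Finset.Ico 1 n).card := Set.ncard_coe_finset _
        _ = n - 1 := Nat.card_Ico 1 n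
  · have hempty : IsEmpty (Fin n → G) := ⟨fun f => hG ⟨f 0⟩⟩
    haveI : Subsingleton ((Fin n → G) → G) := ⟨fun f g => funext fun x => (hempty.false x).elim⟩
    constructor
    · have h1 : acSpec op n ≤ 1 := Set.ncard_le_one_of_subsingleton _
      omega
    · have h1 : assocSpec op n ≤ 1 := Set.ncard_le_one_of_subsingleton _
      omega
end

section
/- Consider the 3-element groupoid G = {0,1,2} with operation * given by the Cayley table: 0*0=0, 0*1=0, 0*2=2; 1*0=0, 1*1=0, 1*2=2; 2*0=2, 2*1=2, 2*2=1 (groupoid SC1066). Then for any full linear term t over x_1,…,x_n and any assignment h : {x_1,…,x_n} → {0,1,2}, the value h(t) equals 2 if and only if h assigns the value 2 to an odd number of the variables of t. -/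
/-- Groupoid SC1066 on `{0,1,2}`. -/
def sc1066 : Fin 3 → Fin 3 → Fin 3 := fun a b => ![![0, 0, 2], ![0, 0, 2], ![2, 2, 1]] a b


lemma sc1066_eq_two_iff (a b : Fin 3) : sc1066 a b = 2 ↔ ((a = 2) ↔ ¬ (b = 2)) := by
  fin_cases a <;> fin_cases b <;> simp [sc1066]

lemma sc1066_key {n : ℕ} (t : Term n) (h : Fin n → Fin 3) :
    t.eval sc1066 h = 2 ↔ Odd (t.leaves.countP (fun i => decide (h i = 2))) := by
  induction t with
  | var i =>
      simp only [Term.eval, Term.leaves, List.countP, List.countP.go]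
      by_cases hi : h i = 2 <;> simp [hi]
  | mul s t ihs iht =>
      simp only [Term.eval, Term.leaves, List.countP_append, sc1066_eq_two_iff,
        Nat.odd_add, Nat.not_odd_iff_even.symm, ihs, iht]

/-- For SC1066, a full linear term evaluates to `2` iff an odd number of its
variables are assigned the value `2`. -/
theorem sc1066_eval_eq_two_iff {n : ℕ} (t : Term n) (ht : t.IsLinear) (h : Fin n → Fin 3) :
    t.eval sc1066 h = 2 ↔ Odd (Finset.univ.filter fun i => h i = 2).card := by
  have := sc1066_key t h
  rw [this]
  have hc : t.leaves.countP (fun i => decide (h i = 2)) =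
      (Finset.univ.filter fun i => h i = 2).card := by
    rw [List.Perm.countP_eq _ ht, List.countP_eq_length_filter]
    rfl
  rw [hc]
end

section
/- Let (G,+) be a commutative group of exponent greater than 2 (i.e., there exists g ∈ G with g + g ≠ 0), and define a*b := a − b. Then for every n ≥ 2, the number of distinct n-ary operations induced on G by bracketings of x_1 ⋯ x_n equals exactly 2^{n-2}, and the number induced by full linear terms equals exactly 2^n − 2. -/
namespace SubSpec


variable {n : ℕ}

/-- Integer coefficient of variable `j` in a term, for the operation `a - b`. -/
def coef : Term n → Fin n → ℤ
  | .var i, j => if j = i then 1 else 0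
  | .mul s t, j => coef s j - coef t j

variable {G : Type*} [AddCommGroup G]

lemma eval_sub (t : Term n) (h : Fin n → G) :
    t.eval (fun a b => a - b) h = ∑ j, coef t j • h j := by
  induction t with
  | var i => simp [Term.eval, coef, ite_smul]
  | mul s u hs hu =>
      simp only [Term.eval, coef, hs, hu, sub_smul, Finset.sum_sub_distrib]

lemma coef_of_not_mem {t : Term n} {j : Fin n} (h : j ∉ t.leaves) : coef t j = 0 := by
  induction t with
  | var i => simp [Term.leaves] at h; simp [coef, h]
  | mul s u hs hu =>
      simp [Term.leaves] at h
      simp [coef, hs h.1, hu h.2]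

lemma leaves_eq_leftVar_cons (t : Term n) : ∃ l, t.leaves = t.leftVar :: l := by
  induction t with
  | var i => exact ⟨[], rfl⟩
  | mul s u hs _ =>
      obtain ⟨l, hl⟩ := hs
      exact ⟨l ++ u.leaves, by simp [Term.leaves, Term.leftVar, hl]⟩

lemma leftVar_mem (t : Term n) : t.leftVar ∈ t.leaves := by
  obtain ⟨l, hl⟩ := leaves_eq_leftVar_cons t
  simp [hl]

lemma coef_leftVar {t : Term n} (h : t.leaves.Nodup) : coef t t.leftVar = 1 := by
  induction t with
  | var i => simp [coef, Term.leftVar]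
  | mul s u hs _ =>
      rw [Term.leaves, List.nodup_append'] at h
      have h1 : s.leftVar ∉ u.leaves := fun hm => h.2.2 (leftVar_mem s) hm
      simp [coef, Term.leftVar, hs h.1, coef_of_not_mem h1]

lemma coef_mem {t : Term n} (h : t.leaves.Nodup) {j : Fin n} (hj : j ∈ t.leaves) :
    coef t j = 1 ∨ coef t j = -1 := by
  induction t with
  | var i => simp [Term.leaves] at hj; simp [coef, hj]
  | mul s u hs hu =>
      rw [Term.leaves, List.nodup_append'] at h
      rw [Term.leaves, List.mem_append] at hj
      rcases hj with hj | hj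
      · have : j ∉ u.leaves := fun hm => h.2.2 hj hm
        rcases hs h.1 hj with h' | h' <;> simp [coef, h', coef_of_not_mem this]
      · have : j ∉ s.leaves := fun hm => h.2.2 hm hj
        rcases hu h.2.1 hj with h' | h' <;> simp [coef, h', coef_of_not_mem this]

lemma coef_second {t : Term n} (h : t.leaves.Nodup) {a b : Fin n} {l : List (Fin n)}
    (he : t.leaves = a :: b :: l) : coef t b = -1 := by
  induction t generalizing a b l with
  | var i => simp [Term.leaves] at he
  | mul s u hs _ =>
      rw [Term.leaves, List.nodup_append'] at h
      obtain ⟨ls, hls⟩ := leaves_eq_leftVar_cons s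
      rw [Term.leaves] at he
      cases ls with
      | nil =>
          rw [hls] at he
          simp only [List.singleton_append, List.cons.injEq] at he
          obtain ⟨lu, hlu⟩ := leaves_eq_leftVar_cons u
          have hb : b = u.leftVar := by
            rw [hlu] at he
            exact ((List.cons.injEq _ _ _ _).mp he.2).1.symm
          have hbu : coef u b = 1 := by rw [hb]; exact coef_leftVar h.2.1
          have hbs : coef s b = 0 := by
            apply coef_of_not_mem
            intro hm
            exact h.2.2 hm (hb ▸ leftVar_mem u)
          simp [coef, hbs, hbu]
      | cons c ls' =>
          rw [hls] at he
          simp only [List.cons_append, List.cons.injEq] at he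
          have hb : b = c := he.2.1.symm
          have hcs : coef s b = -1 := hs h.1 (hb ▸ hls)
          have hcu : coef u b = 0 := by
            apply coef_of_not_mem
            intro hm
            exact h.2.2 (by rw [hls]; simp [hb]) hm
          simp [coef, hcs, hcu]

lemma leaves_foldc (t : Term n) (l : List (Fin n)) :
    (l.foldl (fun s j => Term.mul s (Term.var j)) t).leaves = t.leaves ++ l := by
  induction l generalizing t with
  | nil => simp
  | cons a l ih => simp [ih, Term.leaves]

lemma coef_foldc (t : Term n) (l : List (Fin n)) (k : Fin n) :
    coef (l.foldl (fun s j => Term.mul s (Term.var j)) t) k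
      = coef t k - (l.count k : ℤ) := by
  induction l generalizing t with
  | nil => simp
  | cons a l ih =>
      rw [List.foldl_cons, ih, List.count_cons]
      rcases eq_or_ne a k with h | h
      · subst h; simp [coef]; omega
      · simp [coef, h, Ne.symm h]

lemma dropWhile_head_not (p : Fin n → Bool) (l : List (Fin n)) {a : Fin n} {l' : List (Fin n)}
    (h : l.dropWhile p = a :: l') : p a = false := by
  induction l with
  | nil => simp at h
  | cons b l ih =>
      rw [List.dropWhile_cons] at h
      by_cases hb : p b = true
      · rw [if_pos hb] at h; exact ih h
      · rw [if_neg hb] at h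
        cases h
        exact Bool.eq_false_iff.mpr hb

/-- Key construction: attach a list of variables with prescribed ±1 signs to a term,
provided the first sign is `-1`. -/
lemma build (ε : Fin n → ℤ) :
    ∀ (m : ℕ) (l : List (Fin n)) (t : Term n), l.length ≤ m →
    (t.leaves ++ l).Nodup →
    (∀ j ∈ l, ε j = 1 ∨ ε j = -1) →
    (∀ a l', l = a :: l' → ε a = -1) →
    ∃ u : Term n, u.leaves = t.leaves ++ l ∧
      ∀ k, coef u k = if k ∈ l then ε k else coef t k := by
  intro m
  induction m with
  | zero =>
      intro l t hlen _ _ _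
      have : l = [] := List.length_eq_zero_iff.mp (Nat.le_zero.mp hlen)
      subst this
      exact ⟨t, by simp⟩
  | succ m ih =>
      intro l t hlen hnd hsg hhd
      cases l with
      | nil => exact ⟨t, by simp⟩
      | cons j rest =>
          set p : Fin n → Bool := fun x => ε x == 1 with hp
          set pl := rest.takeWhile p with hpl
          set rest' := rest.dropWhile p with hrest'
          have hsplit : pl ++ rest' = rest := by
            rw [hpl, hrest']; exact List.takeWhile_append_dropWhile
          set t' : Term n := Term.mul t (lBr j pl) with ht'
          have hlv : t'.leaves = t.leaves ++ (j :: pl) := by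
            rw [ht', Term.leaves, lBr, leaves_foldc]; simp [Term.leaves]
          have hre : t'.leaves ++ rest' = t.leaves ++ (j :: rest) := by
            rw [hlv, List.append_assoc, List.cons_append, hsplit]
          -- nodup facts
          have hnd2 : (t'.leaves ++ rest').Nodup := by rw [hre]; exact hnd
          have hndl : (j :: rest).Nodup := (List.nodup_append'.mp hnd).2.1
          have hjrest : j ∉ rest := (List.nodup_cons.mp hndl).1
          have hdisj : ∀ k ∈ (j :: rest), k ∉ t.leaves := by
            intro k hk hkt
            exact (List.nodup_append'.mp hnd).2.2 hkt hk
          obtain ⟨u, hul, huc⟩ := ih rest' t'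
            (by
              have h1 : rest'.length ≤ rest.length := (List.dropWhile_sublist _).length_le
              have h2 : rest.length + 1 ≤ m + 1 := by simpa using hlen
              omega)
            hnd2
            (fun k hk => hsg k (by
              have : k ∈ rest := (List.dropWhile_sublist _).mem hk
              exact List.mem_cons_of_mem _ this))
            (by
              intro a l' hl'
              have ha : a ∈ rest := by
                have : a ∈ rest' := by rw [hl']; simp
                exact (List.dropWhile_sublist _).mem this
              have := dropWhile_head_not p rest (hrest' ▸ hl')
              rcases hsg a (List.mem_cons_of_mem _ ha) with h1 | h1
              · exfalso; rw [hp] at this; simp [h1] at this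
              · exact h1)
          refine ⟨u, by rw [hul, hre], ?_⟩
          intro k
          rw [huc k]
          have hcoef_t' : coef t' k = coef t k - ((if k = j then 1 else 0) - (pl.count k : ℤ)) := by
            rw [ht', coef, lBr, coef_foldc]
            simp [coef]
          by_cases hk1 : k ∈ rest'
          · have : k ∈ j :: rest := by
              exact List.mem_cons_of_mem _ ((List.dropWhile_sublist _).mem hk1)
            rw [if_pos hk1, if_pos this]
          · rw [if_neg hk1, hcoef_t']
            by_cases hkj : k = j
            · subst hkj
              have h0 : coef t k = 0 := coef_of_not_mem (fun h => hdisj k (by simp) h)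
              have hnotpl : k ∉ pl := fun h => hjrest ((List.takeWhile_sublist _).mem h)
              rw [if_pos (by simp)]
              rw [h0, List.count_eq_zero_of_not_mem hnotpl]
              simp [hhd k rest rfl]
            · by_cases hkpl : k ∈ pl
              · have hkrest : k ∈ rest := (List.takeWhile_sublist _).mem hkpl
                have h0 : coef t k = 0 :=
                  coef_of_not_mem (fun h => hdisj k (List.mem_cons_of_mem _ hkrest) h)
                have hcount : pl.count k = 1 :=
                  List.count_eq_one_of_mem ((List.nodup_cons.mp hndl).2.sublist (List.takeWhile_sublist _)) hkpl
                have hε : ε k = 1 := by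
                  have := List.mem_takeWhile_imp hkpl
                  rw [hp] at this; simpa using this
                rw [if_pos (List.mem_cons_of_mem _ hkrest), hε, h0, hcount]
                simp [hkj]
              · have hknot : k ∉ j :: rest := by
                  simp only [List.mem_cons]
                  rintro (h | h)
                  · exact hkj h
                  · rw [← hsplit, List.mem_append] at h
                    exact absurd h (by simp [hkpl, hk1])
                rw [if_neg hknot, List.count_eq_zero_of_not_mem hkpl]
                simp [hkj]


lemma card_subtype_two (a b : Fin n) (hab : a ≠ b) :
    Fintype.card {i : Fin n // i ≠ a ∧ i ≠ b} = n - 2 := by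
  classical
  rw [Fintype.card_subtype]
  have : Finset.univ.filter (fun i : Fin n => i ≠ a ∧ i ≠ b) = Finset.univ \ {a, b} := by
    ext i; simp [not_or]
  rw [this, Finset.card_sdiff_of_subset (Finset.subset_univ _), Finset.card_pair hab]
  simp

noncomputable def boolEquiv (a b : Fin n) (hab : a ≠ b) :
    {v : Fin n → Bool // v a = true ∧ v b = false} ≃ ({i : Fin n // i ≠ a ∧ i ≠ b} → Bool) where
  toFun w i := w.1 i.1
  invFun f := ⟨fun i => if h : i = a then true else if h' : i = b then false else f ⟨i, h, h'⟩,
    by simp, by simp [hab.symm]⟩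
  left_inv w := by
    apply Subtype.ext
    funext i
    by_cases h : i = a
    · subst h; simp [w.2.1]
    · by_cases h' : i = b
      · subst h'; simp [h, w.2.2]
      · simp [h, h']
  right_inv f := by
    funext i
    simp [i.2.1, i.2.2]

lemma ncard_Sb (hn : 2 ≤ n) (a b : Fin n) (hab : a ≠ b) :
    {ε : Fin n → ℤ | (∀ i, ε i = 1 ∨ ε i = -1) ∧ ε a = 1 ∧ ε b = -1}.ncard = 2 ^ (n - 2) := by
  classical
  have himg : {ε : Fin n → ℤ | (∀ i, ε i = 1 ∨ ε i = -1) ∧ ε a = 1 ∧ ε b = -1}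
      = (fun (v : Fin n → Bool) (i : Fin n) => if v i then (1 : ℤ) else -1) ''
        {v | v a = true ∧ v b = false} := by
    ext ε
    constructor
    · rintro ⟨h1, h2, h3⟩
      refine ⟨fun i => decide (ε i = 1), ⟨by simp [h2], by simp [h3]⟩, ?_⟩
      funext i
      rcases h1 i with h | h <;> simp [h]
    · rintro ⟨v, ⟨hv1, hv2⟩, rfl⟩
      refine ⟨fun i => by by_cases h : v i <;> simp [h], by simp [hv1], by simp [hv2]⟩
  rw [himg, Set.ncard_image_of_injOn]
  · have : {v : Fin n → Bool | v a = true ∧ v b = false}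
        = ↑(Finset.univ.filter fun v : Fin n → Bool => v a = true ∧ v b = false) := by
      ext v; simp
    rw [this, Set.ncard_coe_finset, ← Fintype.card_subtype,
      Fintype.card_congr (boolEquiv a b hab), Fintype.card_fun, card_subtype_two a b hab]
    simp
  · intro v _ v' _ h
    funext i
    have := congrFun h i
    by_cases h1 : v i <;> by_cases h2 : v' i <;> simp_all

lemma ncard_Sl (hn : 2 ≤ n) :
    {ε : Fin n → ℤ | (∀ i, ε i = 1 ∨ ε i = -1) ∧ (∃ i, ε i = 1) ∧ (∃ i, ε i = -1)}.ncard
      = 2 ^ n - 2 := by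
  classical
  have himg : {ε : Fin n → ℤ | (∀ i, ε i = 1 ∨ ε i = -1) ∧ (∃ i, ε i = 1) ∧ (∃ i, ε i = -1)}
      = (fun (v : Fin n → Bool) (i : Fin n) => if v i then (1 : ℤ) else -1) ''
        {v | (∃ i, v i = true) ∧ (∃ i, v i = false)} := by
    ext ε
    constructor
    · rintro ⟨h1, ⟨i1, h2⟩, ⟨i2, h3⟩⟩
      refine ⟨fun i => decide (ε i = 1), ⟨⟨i1, by simp [h2]⟩, ⟨i2, by simp [h3]⟩⟩, ?_⟩
      funext i
      rcases h1 i with h | h <;> simp [h]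
    · rintro ⟨v, ⟨⟨i1, hv1⟩, ⟨i2, hv2⟩⟩, rfl⟩
      exact ⟨fun i => by by_cases h : v i <;> simp [h],
        ⟨i1, by simp [hv1]⟩, ⟨i2, by simp [hv2]⟩⟩
  rw [himg, Set.ncard_image_of_injOn]
  · set P : (Fin n → Bool) → Prop := fun v => (∃ i, v i = true) ∧ (∃ i, v i = false) with hP
    have hset : {v : Fin n → Bool | P v} = ↑(Finset.univ.filter P) := by ext v; simp
    rw [hset, Set.ncard_coe_finset]
    have hcompl : Finset.univ.filter (fun v => ¬ P v)
        = ({fun _ => true, fun _ => false} : Finset (Fin n → Bool)) := by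
      ext v
      simp only [Finset.mem_filter, Finset.mem_univ, true_and, Finset.mem_insert,
        Finset.mem_singleton, hP, not_and_or, not_exists]
      constructor
      · rintro (h | h)
        · right; funext i; simpa using h i
        · left; funext i; simpa using h i
      · rintro (rfl | rfl)
        · right; simp
        · left; simp
    have hne : (fun _ : Fin n => true) ≠ (fun _ => false) := by
      intro h
      have := congrFun h ⟨0, by omega⟩
      simp at this
    have htot := Finset.card_filter_add_card_filter_not (s := Finset.univ) (p := P)
    rw [hcompl, Finset.card_pair hne] at htot
    have huniv : (Finset.univ : Finset (Fin n → Bool)).card = 2 ^ n := by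
      simp [Fintype.card_fun]
    omega
  · intro v _ v' _ h
    funext i
    have := congrFun h i
    by_cases h1 : v i <;> by_cases h2 : v' i <;> simp_all

variable {G : Type*} [AddCommGroup G]

lemma F_injOn {g : G} (hg : g + g ≠ 0) :
    Set.InjOn (fun (ε : Fin n → ℤ) (h : Fin n → G) => ∑ j, ε j • h j)
      {ε | ∀ i, ε i = 1 ∨ ε i = -1} := by
  intro ε hε ε' hε' h
  funext i
  have hi := congrFun h (fun j => if j = i then g else 0)
  have key : ∀ δ : Fin n → ℤ, ∑ j, δ j • (if j = i then g else (0 : G)) = δ i • g := by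
    intro δ
    rw [Finset.sum_eq_single i]
    · simp
    · intro j _ hj; simp [hj]
    · simp
  dsimp only at hi
  rw [key, key] at hi
  have hgg : ¬ (g = -g) := fun hh => hg (eq_neg_iff_add_eq_zero.mp hh)
  rcases hε i with h1 | h1 <;> rcases hε' i with h2 | h2 <;> rw [h1, h2] at hi ⊢
  · exfalso
    rw [one_smul, neg_smul, one_smul] at hi
    exact hgg hi
  · exfalso
    rw [one_smul, neg_smul, one_smul] at hi
    exact hgg hi.symm

end SubSpec

/-- Spectra of subtraction on a commutative group of exponent greater than 2. -/
theorem spec_subtraction {G : Type*} [AddCommGroup G] (hexp : ∃ g : G, g + g ≠ 0)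
    (n : ℕ) (hn : 2 ≤ n) :
    assocSpec (fun a b : G => a - b) n = 2 ^ (n - 2) ∧
    acSpec (fun a b : G => a - b) n = 2 ^ n - 2 := by
  classical
  open SubSpec in
  obtain ⟨g, hg⟩ := hexp
  have hlen : (List.finRange n).length = n := List.length_finRange
  obtain ⟨a, b, L, hfr⟩ : ∃ a b L, List.finRange n = a :: b :: L := by
    cases hfr : List.finRange n with
    | nil => rw [hfr] at hlen; simp at hlen; omega
    | cons a t =>
      cases t with
      | nil => rw [hfr] at hlen; simp at hlen; omega
      | cons b L => exact ⟨a, b, L, rfl⟩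
  have hnd : (List.finRange n).Nodup := List.nodup_finRange n
  have hndc : (a :: b :: L).Nodup := hfr ▸ hnd
  have hab : a ≠ b := by
    intro h
    have := (List.nodup_cons.mp hndc).1
    exact this (h ▸ List.mem_cons_self (a := b) (l := L))
  set F : (Fin n → ℤ) → (Fin n → G) → G := fun ε h => ∑ j, ε j • h j with hF
  have hInj := SubSpec.F_injOn (n := n) hg
  constructor
  · -- bracketings
    have hSetB : {f : (Fin n → G) → G |
          ∃ t : Term n, t.IsBracketing ∧ f = fun h => t.eval (fun a b : G => a - b) h}
        = F '' {ε : Fin n → ℤ | (∀ i, ε i = 1 ∨ ε i = -1) ∧ ε a = 1 ∧ ε b = -1} := by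
      ext f
      constructor
      · rintro ⟨t, ht, rfl⟩
        have hndt : t.leaves.Nodup := by rw [ht]; exact hnd
        refine ⟨coef t, ⟨?_, ?_, ?_⟩, ?_⟩
        · intro i
          exact coef_mem hndt (by rw [ht]; exact List.mem_finRange i)
        · obtain ⟨l0, hl0⟩ := leaves_eq_leftVar_cons t
          have h2 : t.leftVar :: l0 = a :: b :: L := by rw [← hl0, ht, hfr]
          have hla : t.leftVar = a := (List.cons.injEq _ _ _ _).mp h2 |>.1
          rw [← hla]
          exact coef_leftVar hndt
        · exact coef_second hndt (by rw [ht, hfr])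
        · funext h
          rw [hF]
          exact (eval_sub t h).symm
      · rintro ⟨ε, ⟨h1, h2, h3⟩, rfl⟩
        obtain ⟨u, hul, huc⟩ := build ε n (b :: L) (Term.var a)
          (by
            have : (a :: b :: L).length = n := by rw [← hfr]; exact hlen
            simp at this ⊢
            omega)
          (by simpa [Term.leaves] using hndc)
          (fun j _ => h1 j)
          (by
            rintro a' l' hh
            cases hh
            exact h3)
        have hlv : u.leaves = a :: b :: L := by
          rw [hul]; simp [Term.leaves]
        have hcoef : coef u = ε := by
          funext k
          rw [huc k]
          by_cases hk : k ∈ b :: L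
          · rw [if_pos hk]
          · rw [if_neg hk]
            have hk2 : k ∈ a :: b :: L := hfr ▸ List.mem_finRange k
            have hka : k = a := by
              rcases List.mem_cons.mp hk2 with h | h
              · exact h
              · exact absurd h hk
            subst hka
            simp [coef, h2]
        refine ⟨u, ?_, ?_⟩
        · unfold Term.IsBracketing
          rw [hlv, hfr]
        · funext h
          rw [hF, eval_sub, hcoef]
    rw [assocSpec, hSetB,
      Set.ncard_image_of_injOn (hInj.mono (fun ε hε => hε.1)),
      SubSpec.ncard_Sb hn a b hab]
  · -- linear terms
    have hSetL : {f : (Fin n → G) → G |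
          ∃ t : Term n, t.IsLinear ∧ f = fun h => t.eval (fun a b : G => a - b) h}
        = F '' {ε : Fin n → ℤ | (∀ i, ε i = 1 ∨ ε i = -1) ∧ (∃ i, ε i = 1) ∧ (∃ i, ε i = -1)} := by
      ext f
      constructor
      · rintro ⟨t, ht, rfl⟩
        have hndt : t.leaves.Nodup := ht.nodup_iff.mpr hnd
        have hlen2 : t.leaves.length = n := ht.length_eq.trans hlen
        obtain ⟨a', b', L', hshape⟩ : ∃ a' b' L', t.leaves = a' :: b' :: L' := by
          cases hsh : t.leaves with
          | nil => rw [hsh] at hlen2; simp at hlen2; omega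
          | cons x s =>
            cases s with
            | nil => rw [hsh] at hlen2; simp at hlen2; omega
            | cons y s' => exact ⟨x, y, s', rfl⟩
        refine ⟨coef t, ⟨?_, ?_, ?_⟩, ?_⟩
        · intro i
          exact coef_mem hndt (ht.mem_iff.mpr (List.mem_finRange i))
        · exact ⟨t.leftVar, coef_leftVar hndt⟩
        · exact ⟨b', coef_second hndt hshape⟩
        · funext h
          rw [hF]
          exact (eval_sub t h).symm
      · rintro ⟨ε, ⟨h1, ⟨p, hp⟩, ⟨q, hq⟩⟩, rfl⟩
        have hpq : p ≠ q := by
          intro h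
          rw [h, hq] at hp
          norm_num at hp
        set L0 := ((List.finRange n).erase p).erase q with hL0
        have hperm : List.Perm (List.finRange n) (p :: q :: L0) := by
          refine (List.perm_cons_erase (List.mem_finRange p)).trans (List.Perm.cons p ?_)
          exact List.perm_cons_erase ((List.mem_erase_of_ne hpq.symm).mpr (List.mem_finRange q))
        have hndP : (p :: q :: L0).Nodup := hperm.nodup hnd
        obtain ⟨u, hul, huc⟩ := build ε n (q :: L0) (Term.var p)
          (by
            have := hperm.length_eq
            rw [hlen] at this
            simp at this ⊢
            omega)
          (by simpa [Term.leaves] using hndP)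
          (fun j _ => h1 j)
          (by
            rintro a' l' hh
            cases hh
            exact hq)
        have hlv : u.leaves = p :: q :: L0 := by
          rw [hul]; simp [Term.leaves]
        have hcoef : coef u = ε := by
          funext k
          rw [huc k]
          by_cases hk : k ∈ q :: L0
          · rw [if_pos hk]
          · rw [if_neg hk]
            have hk2 : k ∈ p :: q :: L0 := hperm.mem_iff.mp (List.mem_finRange k)
            have hka : k = p := by
              rcases List.mem_cons.mp hk2 with h | h
              · exact h
              · exact absurd h hk
            subst hka
            simp [coef, hp]
        refine ⟨u, ?_, ?_⟩
        · unfold Term.IsLinear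
          rw [hlv]
          exact hperm.symm
        · funext h
          rw [hF, eval_sub, hcoef]
    rw [acSpec, hSetL,
      Set.ncard_image_of_injOn (hInj.mono (fun ε hε => hε.1)),
      SubSpec.ncard_Sl hn]
end

section
/- Let (G,*) be a groupoid satisfying the identities x*(y*z) = x*(z*y) and (x*y)*z = (x*z)*y. Then for every n ≥ 1, if two full linear terms s and t over x_1,…,x_n have the same leftmost variable and their leftmost decompositions determine the same (unordered) set partition of the remaining variables into subterm blocks, then s^* = t^*. Consequently the number of distinct n-ary operations induced by full linear terms is at most n·B_{n-1}, where B_{n-1} is the Bell number, and the number induced by bracketings of x_1⋯x_n is at most 2^{n-2} for n ≥ 2. -/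
section Core
variable {G : Type*} (op : G → G → G)

/-- right-comb product of a nonempty list `a :: l`. -/
def rc : G → List G → G
  | a, [] => a
  | a, b :: l => op a (rc b l)

variable (h1 : ∀ x y z : G, op x (op y z) = op x (op z y))
variable (h2 : ∀ x y z : G, op (op x y) z = op (op x z) y)

include h1 h2

lemma ctx_assoc (x a b c : G) :
    op x (op a (op b c)) = op x (op (op a b) c) := by
  rw [h1 x a (op b c), h2 b c a, h1 x, h1 c b a, h1 x c (op a b)]

omit h2 in
lemma ctx_lcomm (x a b c : G) :
    op x (op (op a b) c) = op x (op (op b a) c) := by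
  rw [h1 x (op a b) c, h1 c a b, h1 x c (op b a)]

lemma ctx_swap (x b c : G) : ∀ l : List G, op x (rc op b (c :: l)) = op x (rc op c (b :: l))
  | [] => h1 x b c
  | d :: l => by
    show op x (op b (op c (rc op d l))) = op x (op c (op b (rc op d l)))
    rw [ctx_assoc op h1 h2, ctx_lcomm op h1, ← ctx_assoc op h1 h2]

lemma ctx_perm_tail {l l' : List G} (p : l.Perm l') (x a : G) :
    op x (rc op a l) = op x (rc op a l') := by
  induction p generalizing x a with
  | nil => rfl
  | cons b _ ih =>
      show op x (op a (rc op b _)) = op x (op a (rc op b _))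
      rw [ih a b]
  | swap b c l =>
      exact congrArg (op x) (ctx_swap op h1 h2 a c b l)
  | trans _ _ ih1 ih2 => rw [ih1 x a, ih2 x a]

lemma ctx_perm {a b : G} {l l' : List G} (p : (a :: l).Perm (b :: l')) (x : G) :
    op x (rc op a l) = op x (rc op b l') := by
  by_cases hab : a = b
  · subst hab
    exact ctx_perm_tail op h1 h2 p.cons_inv x a
  · have hb : b ∈ l := by
      have hb' : b ∈ a :: l := p.symm.subset (List.mem_cons_self (a := b) (l := l'))
      rcases List.mem_cons.mp hb' with h | h
      · exact absurd h.symm hab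
      · exact h
    obtain ⟨l₁, l₂, rfl⟩ := List.append_of_mem hb
    have pmid : (l₁ ++ b :: l₂).Perm (b :: (l₁ ++ l₂)) := List.perm_middle
    have step1 : op x (rc op a (l₁ ++ b :: l₂)) = op x (rc op a (b :: (l₁ ++ l₂))) :=
      ctx_perm_tail op h1 h2 pmid x a
    have step2 : op x (rc op a (b :: (l₁ ++ l₂))) = op x (rc op b (a :: (l₁ ++ l₂))) :=
      ctx_swap op h1 h2 x a b (l₁ ++ l₂)
    have ptail : (a :: (l₁ ++ l₂)).Perm l' := by
      have hsw : (b :: a :: (l₁ ++ l₂)).Perm (a :: (l₁ ++ b :: l₂)) :=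
        ((List.Perm.swap a b _).trans (List.perm_middle.symm.cons a))
      exact (hsw.trans p).cons_inv
    rw [step1, step2, ctx_perm_tail op h1 h2 ptail x b]

end Core

section Part1
variable {G : Type*} {n : ℕ} (op : G → G → G)
variable (h1 : ∀ x y z : G, op x (op y z) = op x (op z y))
variable (h2 : ∀ x y z : G, op (op x y) z = op (op x z) y)
include h1 h2

lemma rc_append : ∀ (l : List G) (a b : G) (m : List G) (x : G),
    op x (op (rc op a l) (rc op b m)) = op x (rc op a (l ++ b :: m))
  | [], a, b, m, x => rfl
  | c :: l, a, b, m, x => by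
    show op x (op (op a (rc op c l)) (rc op b m)) = op x (op a (rc op c (l ++ b :: m)))
    rw [← ctx_assoc op h1 h2, rc_append l c b m a]

omit h1 h2 in
lemma Term.leaves_ne_nil (t : Term n) : t.leaves ≠ [] := by
  induction t with
  | var i => simp [Term.leaves]
  | mul s t ihs iht => simp [Term.leaves]; intro hs; exact absurd hs ihs

lemma eval_ctx (h : Fin n → G) : ∀ (u : Term n) (a : Fin n) (l : List (Fin n)),
    u.leaves = a :: l → ∀ x, op x (u.eval op h) = op x (rc op (h a) (l.map h))
  | Term.var i, a, l, hl, x => by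
    simp only [Term.leaves, List.cons.injEq] at hl
    obtain ⟨rfl, rfl⟩ := hl
    rfl
  | Term.mul s t, a, l, hl, x => by
    obtain ⟨as, ls, hs⟩ : ∃ as ls, s.leaves = as :: ls := by
      cases hse : s.leaves with
      | nil => exact absurd hse s.leaves_ne_nil
      | cons y ys => exact ⟨y, ys, rfl⟩
    obtain ⟨at', lt, ht⟩ : ∃ at' lt, t.leaves = at' :: lt := by
      cases hte : t.leaves with
      | nil => exact absurd hte t.leaves_ne_nil
      | cons y ys => exact ⟨y, ys, rfl⟩
    simp only [Term.leaves, hs, ht, List.cons_append, List.cons.injEq] at hl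
    obtain ⟨rfl, rfl⟩ := hl
    show op x (op (s.eval op h) (t.eval op h)) = _
    rw [eval_ctx h t at' lt ht (s.eval op h), h1, eval_ctx h s as ls hs (rc op (h at') (lt.map h)),
      h1, rc_append op h1 h2]
    simp [List.map_append]

lemma eval_ctx_perm (h : Fin n → G) {u u' : Term n} (hp : u.leaves.Perm u'.leaves) (x : G) :
    op x (u.eval op h) = op x (u'.eval op h) := by
  obtain ⟨a, l, hl⟩ : ∃ a l, u.leaves = a :: l := by
    cases hse : u.leaves with
    | nil => exact absurd hse u.leaves_ne_nil
    | cons y ys => exact ⟨y, ys, rfl⟩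
  obtain ⟨b, m, hm⟩ : ∃ b m, u'.leaves = b :: m := by
    cases hse : u'.leaves with
    | nil => exact absurd hse u'.leaves_ne_nil
    | cons y ys => exact ⟨y, ys, rfl⟩
  rw [eval_ctx op h1 h2 h u a l hl x, eval_ctx op h1 h2 h u' b m hm x]
  have : ((h a) :: l.map h).Perm ((h b) :: m.map h) := by
    have := hp
    rw [hl, hm] at this
    simpa using this.map h
  exact ctx_perm op h1 h2 this x

omit h1 h2 in
lemma eval_eq_foldl (h : Fin n → G) (t : Term n) :
    t.eval op h = t.lmFactors.foldl (fun g u => op g (u.eval op h)) (h t.leftVar) := by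
  induction t with
  | var i => rfl
  | mul s u ihs ihu =>
    show op (s.eval op h) (u.eval op h) = _
    rw [ihs]
    simp [Term.lmFactors, Term.leftVar, List.foldl_append]

omit h1 in
lemma foldl_perm (h : Fin n → G) {F F' : List (Term n)} (p : F.Perm F') (x : G) :
    F.foldl (fun g u => op g (u.eval op h)) x = F'.foldl (fun g u => op g (u.eval op h)) x := by
  induction p generalizing x with
  | nil => rfl
  | cons b _ ih => exact ih _
  | swap b c l =>
    show List.foldl _ (op (op x (c.eval op h)) (b.eval op h)) l
       = List.foldl _ (op (op x (b.eval op h)) (c.eval op h)) l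
    rw [h2]
  | trans _ _ ih1 ih2 => rw [ih1, ih2]

lemma foldl_congr (h : Fin n → G) {F F' : List (Term n)}
    (hf : List.Forall₂ (fun u v => u.leaves.Perm v.leaves) F F') (x : G) :
    F.foldl (fun g u => op g (u.eval op h)) x = F'.foldl (fun g u => op g (u.eval op h)) x := by
  induction hf generalizing x with
  | nil => rfl
  | cons huv _ ih =>
    show List.foldl _ (op x _) _ = List.foldl _ (op x _) _
    rw [eval_ctx_perm op h1 h2 h huv x]
    exact ih _

omit h1 h2 in
lemma exists_perm_of_map_perm {α β : Type*} (f : α → β) :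
    ∀ (l₂ l₁ : List α), (l₁.map f).Perm (l₂.map f) →
    ∃ l : List α, l.Perm l₁ ∧ l.map f = l₂.map f
  | [], l₁, hp => by
    have h0 : l₁.map f = [] := List.Perm.eq_nil (by simpa using hp)
    exact ⟨[], by simp [List.map_eq_nil_iff.mp h0], rfl⟩
  | a :: t₂, l₁, hp => by
    have hfa : f a ∈ l₁.map f := hp.symm.subset (by simp)
    obtain ⟨b, hb, hfb⟩ := List.mem_map.mp hfa
    obtain ⟨s, t, rfl⟩ := List.append_of_mem hb
    have hps : ((s ++ t).map f).Perm (t₂.map f) := by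
      have h0 : ((s ++ b :: t).map f).Perm (f b :: (s ++ t).map f) := by
        simpa using (List.perm_middle (a := f b) (l₁ := s.map f) (l₂ := t.map f))
      have := (h0.symm.trans hp)
      rw [hfb] at this
      simpa using this.cons_inv
    obtain ⟨l, hl1, hl2⟩ := exists_perm_of_map_perm f t₂ (s ++ t) hps
    exact ⟨b :: l, (hl1.cons b).trans List.perm_middle.symm,
      by simp [hfb, hl2]⟩

omit h1 h2 in
lemma forall₂_of_map_eq {α β : Type*} {f : α → β} :
    ∀ {l₁ l₂ : List α}, l₁.map f = l₂.map f → List.Forall₂ (fun a b => f a = f b) l₁ l₂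
  | [], [], _ => List.Forall₂.nil
  | [], _ :: _, h => by simp at h
  | _ :: _, [], h => by simp at h
  | a :: l₁, b :: l₂, h => by
    simp only [List.map_cons, List.cons.injEq] at h
    exact List.Forall₂.cons h.1 (forall₂_of_map_eq h.2)

omit h1 h2 in
lemma forall₂_lift {α : Type*} {R R' : α → α → Prop} {l₁ l₂ : List α}
    (h : List.Forall₂ R l₁ l₂)
    (him : ∀ a ∈ l₁, ∀ b ∈ l₂, R a b → R' a b) : List.Forall₂ R' l₁ l₂ := by
  induction h with
  | nil => exact .nil
  | cons hab h ih =>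
    exact .cons (him _ (by simp) _ (by simp) hab)
      (ih fun a ha b hb hr => him a (by simp [ha]) b (by simp [hb]) hr)

omit h1 h2 in
lemma Term.leaves_decomp (t : Term n) :
    t.leaves = t.leftVar :: (t.lmFactors.map Term.leaves).flatten := by
  induction t with
  | var i => rfl
  | mul s u ihs ihu =>
    show s.leaves ++ u.leaves = _
    rw [ihs]
    simp [Term.lmFactors, Term.leftVar]

omit h1 h2 in
lemma Term.factor_leaves_nodup {t : Term n} (ht : t.leaves.Nodup) {u : Term n}
    (hu : u ∈ t.lmFactors) : u.leaves.Nodup := by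
  have h1 : u.leaves ∈ t.lmFactors.map Term.leaves := List.mem_map_of_mem hu
  have h2 : u.leaves.Sublist (t.lmFactors.map Term.leaves).flatten := List.sublist_flatten_of_mem h1
  have h3 : (t.lmFactors.map Term.leaves).flatten.Nodup := by
    rw [t.leaves_decomp] at ht
    exact (List.nodup_cons.mp ht).2
  exact h2.nodup h3

theorem main1 (s t : Term n) (hs : s.IsLinear) (ht : t.IsLinear)
    (hlv : s.leftVar = t.leftVar)
    (hp : (s.lmFactors.map fun u => u.leaves.toFinset).Perm
      (t.lmFactors.map fun u => u.leaves.toFinset))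
    (h : Fin n → G) : s.eval op h = t.eval op h := by
  obtain ⟨F, hF1, hF2⟩ := exists_perm_of_map_perm (fun u : Term n => u.leaves.toFinset)
    t.lmFactors s.lmFactors hp
  have hsn : s.leaves.Nodup := hs.nodup_iff.mpr (List.nodup_finRange n)
  have htn : t.leaves.Nodup := ht.nodup_iff.mpr (List.nodup_finRange n)
  have hforall : List.Forall₂ (fun u v : Term n => u.leaves.Perm v.leaves) F t.lmFactors := by
    refine forall₂_lift (forall₂_of_map_eq hF2) ?_
    intro a ha b hb hab
    exact List.perm_of_nodup_nodup_toFinset_eq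
      (Term.factor_leaves_nodup hsn (hF1.subset ha)) (Term.factor_leaves_nodup htn hb) hab
  rw [eval_eq_foldl op h s, eval_eq_foldl op h t, hlv,
    foldl_perm op h2 h hF1.symm (h t.leftVar), foldl_congr op h1 h2 h hforall]
end Part1

section Count
variable {α : Type*} [DecidableEq α]

def IsPart (s : Finset α) (P : Finset (Finset α)) : Prop :=
  (∀ B ∈ P, B.Nonempty) ∧ (∀ B ∈ P, ∀ C ∈ P, B ≠ C → Disjoint B C) ∧ P.sup id = s

lemma bell_succ (m : ℕ) : bell (m + 1) = ∑ k ∈ Finset.range (m + 1), Nat.choose m k * bell k := by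
  rw [bell]
  exact Fin.sum_univ_eq_sum_range (fun k => Nat.choose m k * bell k) (m + 1)

lemma part_count : ∀ (m : ℕ) (s : Finset α), s.card = m →
    ∀ (Q : Finset (Finset (Finset α))), (∀ P ∈ Q, IsPart s P) → Q.card ≤ bell m := by
  intro m
  induction m using Nat.strong_induction_on with
  | _ m ih =>
  intro s hs Q hQ
  rcases m with _ | m'
  · have hse : s = ∅ := Finset.card_eq_zero.mp hs
    subst hse
    have : ∀ P ∈ Q, P = (∅ : Finset (Finset α)) := by
      intro P hP
      obtain ⟨hne, _, hsup⟩ := hQ P hP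
      refine Finset.eq_empty_of_forall_notMem (fun B hB => ?_)
      have hBsub : B ⊆ ∅ := by
        have := Finset.le_sup (f := id) hB
        rw [hsup] at this
        exact this
      obtain ⟨x, hx⟩ := hne B hB
      exact absurd (hBsub hx) (by simp)
    calc Q.card ≤ 1 := Finset.card_le_one.mpr (fun P hP P' hP' => (this P hP).trans (this P' hP').symm)
    _ = bell 0 := by rw [bell]
  · classical
    have hsne : s.Nonempty := Finset.card_pos.mp (by omega)
    obtain ⟨a, ha⟩ := hsne
    set S' := s.erase a with hS'
    have hS'card : S'.card = m' := by rw [hS', Finset.card_erase_of_mem ha, hs]; omega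
    set f : Finset (Finset α) → Finset α := fun P =>
      if h : ∃ B ∈ P, a ∈ B then h.choose else ∅ with hf
    have hfP : ∀ P ∈ Q, f P ∈ P ∧ a ∈ f P := by
      intro P hP
      have hex : ∃ B ∈ P, a ∈ B := by
        have hsup := (hQ P hP).2.2
        have ha' : a ∈ P.sup id := by rw [hsup]; exact ha
        simpa using (Finset.mem_sup.mp ha')
      rw [hf]
      simp only [dif_pos hex]
      exact ⟨hex.choose_spec.1, hex.choose_spec.2⟩
    set g : Finset (Finset α) → Finset (Finset α) := fun P => P.erase (f P) with hg
    set D := S'.powerset.sigma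
      (fun B' => (Q.image g).filter (fun R => IsPart (S' \ B') R)) with hD
    have key : ∀ P ∈ Q, ((f P).erase a ∈ S'.powerset) ∧ (g P ∈ (Q.image g).filter
        (fun R => IsPart (S' \ (f P).erase a) R)) := by
      intro P hP
      obtain ⟨hne, hdisj, hsup⟩ := hQ P hP
      obtain ⟨hfPmem, hafP⟩ := hfP P hP
      have hfsub : f P ⊆ s := by
        have := Finset.le_sup (f := id) hfPmem
        rw [hsup] at this
        exact this
      have hground : S' \ (f P).erase a = s \ f P := by
        ext x
        simp only [hS', Finset.mem_sdiff, Finset.mem_erase]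
        constructor
        · rintro ⟨⟨hxa, hxs⟩, hx⟩
          exact ⟨hxs, fun hxB => hx ⟨hxa, hxB⟩⟩
        · rintro ⟨hxs, hxB⟩
          exact ⟨⟨fun e => hxB (e ▸ hafP), hxs⟩, fun h => hxB h.2⟩
      have hsup' : (g P).sup id = s \ f P := by
        ext x
        simp only [Finset.mem_sup, Finset.mem_sdiff, hg, Finset.mem_erase, id]
        constructor
        · rintro ⟨B, ⟨hBne, hBP⟩, hxB⟩
          refine ⟨by rw [← hsup]; exact Finset.mem_sup.mpr ⟨B, hBP, hxB⟩, fun hxf => ?_⟩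
          exact (Finset.disjoint_left.mp (hdisj B hBP (f P) hfPmem hBne) hxB) hxf
        · rintro ⟨hxs, hxf⟩
          rw [← hsup] at hxs
          obtain ⟨B, hBP, hxB⟩ := Finset.mem_sup.mp hxs
          exact ⟨B, ⟨fun e => hxf (e ▸ hxB), hBP⟩, hxB⟩
      constructor
      · exact Finset.mem_powerset.mpr (Finset.erase_subset_erase a hfsub)
      · refine Finset.mem_filter.mpr ⟨Finset.mem_image_of_mem g hP, ?_⟩
        rw [hground]
        refine ⟨fun B hB => hne B (Finset.mem_of_mem_erase hB),
          fun B hB C hC hBC => hdisj B (Finset.mem_of_mem_erase hB) C (Finset.mem_of_mem_erase hC) hBC,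
          hsup'⟩
    have hinj : Q.card ≤ D.card := by
      refine Finset.card_le_card_of_injOn
        (fun P => (⟨(f P).erase a, g P⟩ : (_ : Finset α) × Finset (Finset α))) ?_ ?_
      · intro P hP
        rw [hD]
        exact Finset.mem_sigma.mpr ⟨(key P hP).1, (key P hP).2⟩
      · intro P hP P' hP' heq
        have heq1 : (f P).erase a = (f P').erase a :=
          congrArg (fun p : (_ : Finset α) × Finset (Finset α) => p.1) heq
        have heq2' : g P = g P' :=
          congrArg (fun p : (_ : Finset α) × Finset (Finset α) => p.2) heq
        have hfeq : f P = f P' := by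
          have e1 : insert a ((f P).erase a) = f P := Finset.insert_erase (hfP P hP).2
          have e2 : insert a ((f P').erase a) = f P' := Finset.insert_erase (hfP P' hP').2
          rw [← e1, ← e2, heq1]
        have e3 : insert (f P) (g P) = P := Finset.insert_erase (hfP P hP).1
        have e4 : insert (f P') (g P') = P' := Finset.insert_erase (hfP P' hP').1
        rw [← e3, ← e4, hfeq, heq2']
    have hDcard : D.card = ∑ B' ∈ S'.powerset,
        ((Q.image g).filter (fun R => IsPart (S' \ B') R)).card := Finset.card_sigma _ _
    have hstep : ∀ B' ∈ S'.powerset,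
        ((Q.image g).filter (fun R => IsPart (S' \ B') R)).card ≤ bell (m' - B'.card) := by
      intro B' hB'
      have hcard : (S' \ B').card = m' - B'.card := by
        rw [Finset.card_sdiff_of_subset (Finset.mem_powerset.mp hB'), hS'card]
      have := ih (S' \ B').card (by omega) (S' \ B') rfl
        ((Q.image g).filter (fun R => IsPart (S' \ B') R))
        (fun R hR => (Finset.mem_filter.mp hR).2)
      rwa [hcard] at this
    have hsum : ∑ B' ∈ S'.powerset, bell (m' - B'.card) = bell (m' + 1) := by
      rw [Finset.sum_powerset S' (fun t => bell (m' - t.card)), hS'card]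
      have : ∀ j ∈ Finset.range (m' + 1),
          ∑ t ∈ Finset.powersetCard j S', bell (m' - t.card) = Nat.choose m' j * bell (m' - j) := by
        intro j hj
        rw [Finset.sum_powersetCard j S' (fun k => bell (m' - k)), hS'card, smul_eq_mul]
      rw [Finset.sum_congr rfl this, ← Finset.sum_range_reflect (fun j => Nat.choose m' j * bell (m' - j)) (m' + 1)]
      rw [bell_succ]
      refine Finset.sum_congr rfl (fun j hj => ?_)
      have hjm : j ≤ m' := by simpa [Nat.lt_succ_iff] using hj
      have h1 : m' + 1 - 1 - j = m' - j := by omega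
      rw [h1, Nat.choose_symm hjm, Nat.sub_sub_self hjm]
    calc Q.card ≤ D.card := hinj
    _ = ∑ B' ∈ S'.powerset, ((Q.image g).filter (fun R => IsPart (S' \ B') R)).card := hDcard
    _ ≤ ∑ B' ∈ S'.powerset, bell (m' - B'.card) := Finset.sum_le_sum hstep
    _ = bell (m' + 1) := hsum

end Count

section Blocks
variable {β : Type*} [DecidableEq β]

lemma flatten_nodup_pairwise : ∀ (L : List (List β)), L.flatten.Nodup →
    (L.map List.toFinset).Pairwise Disjoint
  | [], _ => List.Pairwise.nil
  | l :: L, hn => by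
    rw [List.flatten_cons, List.nodup_append] at hn
    obtain ⟨hl, hL, hdisj⟩ := hn
    refine List.Pairwise.cons ?_ (flatten_nodup_pairwise L hL)
    intro B hB
    obtain ⟨A, hA, rfl⟩ := List.mem_map.mp hB
    rw [Finset.disjoint_left]
    intro x hx hx'
    exact hdisj x (List.mem_toFinset.mp hx) x (List.mem_flatten.mpr ⟨A, hA, List.mem_toFinset.mp hx'⟩) rfl

lemma sup_toFinset : ∀ L : List (List β),
    ((L.map List.toFinset).toFinset).sup id = L.flatten.toFinset
  | [] => rfl
  | l :: L => by
    simp only [List.map_cons, List.toFinset_cons, Finset.sup_insert, List.flatten_cons,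
      List.toFinset_append, sup_toFinset L, id]
    rw [Finset.sup_eq_union]

lemma nodup_of_pairwise_disjoint : ∀ {L : List (Finset β)}, (∀ B ∈ L, B.Nonempty) →
    L.Pairwise Disjoint → L.Nodup
  | [], _, _ => List.nodup_nil
  | B :: L, hne, hp => by
    rw [List.nodup_cons]
    refine ⟨fun hBL => ?_, nodup_of_pairwise_disjoint (fun C hC => hne C (by simp [hC]))
      (List.Pairwise.sublist (List.sublist_cons_self B L) hp)⟩
    have hd : Disjoint B B := (List.pairwise_cons.mp hp).1 B hBL
    obtain ⟨x, hx⟩ := hne B (by simp)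
    exact (Finset.disjoint_left.mp hd hx) hx
end Blocks

section Cuts

def cuts : List ℕ → List ℕ
  | [] => []
  | [_] => []
  | a :: b :: l => a :: (cuts (b :: l)).map (a + ·)

lemma cuts_mem : ∀ (L : List ℕ), (∀ x ∈ L, 0 < x) → ∀ c ∈ cuts L, 1 ≤ c ∧ c < L.sum
  | [], _, c, hc => by simp [cuts] at hc
  | [_], _, c, hc => by simp [cuts] at hc
  | a :: b :: l, hL, c, hc => by
    rw [cuts] at hc
    rcases List.mem_cons.mp hc with rfl | hc
    · refine ⟨hL c (by simp), ?_⟩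
      have hb : 0 < b := hL b (by simp)
      simp only [List.sum_cons]
      omega
    · obtain ⟨c', hc', rfl⟩ := List.mem_map.mp hc
      have := cuts_mem (b :: l) (fun x hx => hL x (by simp [hx])) c' hc'
      simp only [List.sum_cons] at this ⊢
      omega

lemma cuts_sorted : ∀ (L : List ℕ), (∀ x ∈ L, 0 < x) → (cuts L).Pairwise (· < ·)
  | [], _ => List.Pairwise.nil
  | [_], _ => List.Pairwise.nil
  | a :: b :: l, hL => by
    rw [cuts]
    have htail := cuts_sorted (b :: l) (fun x hx => hL x (by simp [hx]))
    refine List.pairwise_cons.mpr ⟨?_, ?_⟩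
    · intro c hc
      obtain ⟨c', hc', rfl⟩ := List.mem_map.mp hc
      have := (cuts_mem (b :: l) (fun x hx => hL x (by simp [hx])) c' hc').1
      omega
    · exact List.Pairwise.map _ (fun hlt => by omega) htail

lemma cuts_inj : ∀ (L M : List ℕ), (∀ x ∈ L, 0 < x) → (∀ x ∈ M, 0 < x) →
    L.sum = M.sum → cuts L = cuts M → L = M
  | [], [], _, _, _, _ => rfl
  | [], m :: M, _, hM, hsum, _ => by
    exfalso
    have : 0 < m := hM m (by simp)
    simp only [List.sum_nil, List.sum_cons] at hsum
    have : 0 ≤ (M.sum : ℕ) := Nat.zero_le _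
    omega
  | l :: L, [], hL, _, hsum, _ => by
    exfalso
    have : 0 < l := hL l (by simp)
    simp only [List.sum_nil, List.sum_cons] at hsum
    omega
  | [a], [b], _, _, hsum, _ => by
    simp only [List.sum_cons, List.sum_nil] at hsum
    have : a = b := by omega
    rw [this]
  | [a], b :: c :: M, _, _, _, hcuts => by
    exfalso; rw [cuts, cuts] at hcuts; simp at hcuts
  | a :: b :: L, [x], _, _, _, hcuts => by
    exfalso; rw [cuts, cuts] at hcuts; simp at hcuts
  | a :: b :: L, x :: y :: M, hL, hM, hsum, hcuts => by
    rw [cuts, cuts] at hcuts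
    simp only [List.cons.injEq] at hcuts
    obtain ⟨rfl, hmap⟩ := hcuts
    have hcuts' : cuts (b :: L) = cuts (y :: M) :=
      List.map_injective_iff.mpr (fun u v huv => by omega) hmap
    have hsum' : (b :: L).sum = (y :: M).sum := by
      simp only [List.sum_cons] at hsum ⊢
      omega
    rw [cuts_inj (b :: L) (y :: M) (fun z hz => hL z (by simp [hz]))
      (fun z hz => hM z (by simp [hz])) hsum' hcuts']
end Cuts


lemma chunks_eq {beta : Type*} : ∀ (L M : List (List beta)), L.flatten = M.flatten →
    L.map List.length = M.map List.length → L = M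
  | [], [], _, _ => rfl
  | [], _ :: _, _, hlen => by simp at hlen
  | _ :: _, [], _, hlen => by simp at hlen
  | a :: L, b :: M, hflat, hlen => by
    simp only [List.map_cons, List.cons.injEq] at hlen
    simp only [List.flatten_cons] at hflat
    obtain ⟨ha, hrest⟩ := List.append_inj hflat hlen.1
    rw [ha, chunks_eq L M hrest hlen.2]

section TermBlocks
variable {n : ℕ}

lemma Term.linear_nodup {t : Term n} (ht : t.IsLinear) : t.leaves.Nodup :=
  ht.nodup_iff.mpr (List.nodup_finRange n)

lemma Term.linear_toFinset {t : Term n} (ht : t.IsLinear) : t.leaves.toFinset = Finset.univ := by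
  rw [List.toFinset_eq_of_perm _ _ ht, List.toFinset_finRange]

lemma Term.flatten_facts {t : Term n} (ht : t.IsLinear) :
    (t.lmFactors.map Term.leaves).flatten.Nodup ∧
    t.leftVar ∉ (t.lmFactors.map Term.leaves).flatten ∧
    (t.lmFactors.map Term.leaves).flatten.toFinset = Finset.univ.erase t.leftVar := by
  have hd := t.leaves_decomp
  have hn := Term.linear_nodup ht
  rw [hd, List.nodup_cons] at hn
  have hu := Term.linear_toFinset ht
  rw [hd, List.toFinset_cons] at hu
  refine ⟨hn.2, hn.1, ?_⟩
  rw [← hu, Finset.erase_insert (by simpa using hn.1)]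

lemma Term.blocks_eq (t : Term n) :
    (t.lmFactors.map fun u => u.leaves.toFinset) = (t.lmFactors.map Term.leaves).map List.toFinset := by
  rw [List.map_map]
  rfl

lemma Term.blocks_nodup {t : Term n} (ht : t.IsLinear) :
    (t.lmFactors.map fun u => u.leaves.toFinset).Nodup := by
  rw [Term.blocks_eq]
  refine nodup_of_pairwise_disjoint ?_ (flatten_nodup_pairwise _ (Term.flatten_facts ht).1)
  intro B hB
  obtain ⟨l, hl, rfl⟩ := List.mem_map.mp hB
  obtain ⟨u, _, rfl⟩ := List.mem_map.mp hl
  exact (List.toFinset_nonempty_iff _).mpr u.leaves_ne_nil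

lemma Term.blocks_isPart {t : Term n} (ht : t.IsLinear) :
    IsPart ((Finset.univ : Finset (Fin n)).erase t.leftVar)
      ((t.lmFactors.map fun u => u.leaves.toFinset).toFinset) := by
  rw [Term.blocks_eq]
  obtain ⟨hflat, _, hfin⟩ := Term.flatten_facts ht
  refine ⟨?_, ?_, ?_⟩
  · intro B hB
    obtain ⟨l, hl, rfl⟩ := List.mem_map.mp (List.mem_toFinset.mp hB)
    obtain ⟨u, _, rfl⟩ := List.mem_map.mp hl
    exact (List.toFinset_nonempty_iff _).mpr u.leaves_ne_nil
  · intro B hB C hC hBC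
    exact (flatten_nodup_pairwise _ hflat).forall
      (List.mem_toFinset.mp hB) (List.mem_toFinset.mp hC) hBC
  · rw [sup_toFinset, hfin]
end TermBlocks

/-- For groupoids satisfying `x(yz) ≈ x(zy)` and `(xy)z ≈ (xz)y`, full linear terms with the
same leftmost variable and the same unordered family of variable blocks in their leftmost
decompositions induce the same operation; consequently the ac-spectrum is at most `n·B_{n-1}`
and the associative spectrum is at most `2^{n-2}`. -/
theorem spec_bounds_rooted_partition {G : Type*} (op : G → G → G)
    (h1 : ∀ x y z : G, op x (op y z) = op x (op z y))
    (h2 : ∀ x y z : G, op (op x y) z = op (op x z) y) (n : ℕ) :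
    (∀ s t : Term n, s.IsLinear → t.IsLinear → s.leftVar = t.leftVar →
      (s.lmFactors.map fun u => u.leaves.toFinset).Perm
        (t.lmFactors.map fun u => u.leaves.toFinset) →
      ∀ h : Fin n → G, s.eval op h = t.eval op h) ∧
    (1 ≤ n → acSpec op n ≤ n * bell (n - 1)) ∧
    (2 ≤ n → assocSpec op n ≤ 2 ^ (n - 2)) := by
  classical
  refine ⟨fun s t hs ht hlv hp h => main1 op h1 h2 s t hs ht hlv hp h, ?_, ?_⟩
  · -- acSpec bound
    intro hn
    set Qi : Fin n → Finset (Finset (Finset (Fin n))) := fun i =>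
      Finset.univ.filter (fun P => IsPart ((Finset.univ : Finset (Fin n)).erase i) P) with hQi
    set K : Finset (Fin n × Finset (Finset (Fin n))) :=
      Finset.univ.biUnion (fun i => (Qi i).image (Prod.mk i)) with hK
    have hQic : ∀ i : Fin n, (Qi i).card ≤ bell (n - 1) := by
      intro i
      have hcard : ((Finset.univ : Finset (Fin n)).erase i).card = n - 1 := by
        rw [Finset.card_erase_of_mem (Finset.mem_univ i), Finset.card_univ, Fintype.card_fin]
      have hpc := part_count ((Finset.univ : Finset (Fin n)).erase i).card _ rfl (Qi i)
        (fun P hP => (Finset.mem_filter.mp hP).2)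
      rwa [hcard] at hpc
    have hKcard : K.card ≤ n * bell (n - 1) := by
      calc K.card ≤ ∑ i : Fin n, ((Qi i).image (Prod.mk i)).card := Finset.card_biUnion_le
      _ ≤ ∑ _i : Fin n, bell (n - 1) :=
          Finset.sum_le_sum (fun i _ => le_trans Finset.card_image_le (hQic i))
      _ = n * bell (n - 1) := by
          simp [Finset.sum_const, Finset.card_univ]
    have hkeyK : ∀ t : Term n, t.IsLinear →
        ((t.leftVar, (t.lmFactors.map fun u => u.leaves.toFinset).toFinset) :
          Fin n × Finset (Finset (Fin n))) ∈ K := by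
      intro t ht
      rw [hK]
      refine Finset.mem_biUnion.mpr ⟨t.leftVar, Finset.mem_univ _, ?_⟩
      exact Finset.mem_image_of_mem _
        (Finset.mem_filter.mpr ⟨Finset.mem_univ _, Term.blocks_isPart ht⟩)
    set S := {f : (Fin n → G) → G | ∃ t : Term n, t.IsLinear ∧ f = fun h => t.eval op h} with hS
    set φ : ((Fin n → G) → G) → Fin n × Finset (Finset (Fin n)) := fun g =>
      if hg : ∃ t : Term n, t.IsLinear ∧ g = fun h => t.eval op h then
        (hg.choose.leftVar, (hg.choose.lmFactors.map fun u => u.leaves.toFinset).toFinset)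
      else (⟨0, by omega⟩, ∅) with hφ
    have hb : S.ncard ≤ (↑K : Set (Fin n × Finset (Finset (Fin n)))).ncard := by
      refine Set.ncard_le_ncard_of_injOn φ ?_ ?_ (K.finite_toSet)
      · intro g hg
        have hg' : ∃ t : Term n, t.IsLinear ∧ g = fun h => t.eval op h := hg
        rw [hφ]
        simp only [dif_pos hg']
        exact hkeyK _ hg'.choose_spec.1
      · intro g hg g' hg' heq
        have e1 : ∃ t : Term n, t.IsLinear ∧ g = fun h => t.eval op h := hg
        have e2 : ∃ t : Term n, t.IsLinear ∧ g' = fun h => t.eval op h := hg'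
        rw [hφ] at heq
        simp only [dif_pos e1, dif_pos e2] at heq
        obtain ⟨hlv, hfin⟩ := Prod.ext_iff.mp heq
        have hperm : (e1.choose.lmFactors.map fun u => u.leaves.toFinset).Perm
            (e2.choose.lmFactors.map fun u => u.leaves.toFinset) :=
          List.perm_of_nodup_nodup_toFinset_eq (Term.blocks_nodup e1.choose_spec.1)
            (Term.blocks_nodup e2.choose_spec.1) hfin
        have heval := main1 op h1 h2 _ _ e1.choose_spec.1 e2.choose_spec.1 hlv hperm
        rw [e1.choose_spec.2, e2.choose_spec.2]
        exact funext heval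
    calc acSpec op n = S.ncard := rfl
    _ ≤ (↑K : Set (Fin n × Finset (Finset (Fin n)))).ncard := hb
    _ = K.card := Set.ncard_coe_finset K
    _ ≤ n * bell (n - 1) := hKcard
  · -- assocSpec bound
    intro hn2
    set T := Finset.Ico 1 (n - 1) with hT
    have hfacts : ∀ t : Term n, t.IsBracketing →
        (∀ x ∈ (t.lmFactors.map Term.leaves).map List.length, 0 < x) ∧
        (((t.lmFactors.map Term.leaves).map List.length).sum = n - 1) ∧
        (List.finRange n = t.leftVar :: (t.lmFactors.map Term.leaves).flatten) := by
      intro t ht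
      have hdec : List.finRange n = t.leftVar :: (t.lmFactors.map Term.leaves).flatten :=
        ht.symm.trans t.leaves_decomp
      have hpos : ∀ x ∈ (t.lmFactors.map Term.leaves).map List.length, 0 < x := by
        intro x hx
        obtain ⟨l, hl, rfl⟩ := List.mem_map.mp hx
        obtain ⟨u, _, rfl⟩ := List.mem_map.mp hl
        exact List.length_pos_iff.mpr u.leaves_ne_nil
      have hsum : ((t.lmFactors.map Term.leaves).map List.length).sum = n - 1 := by
        have hlen : (List.finRange n).length =
            ((t.lmFactors.map Term.leaves).flatten).length + 1 := by
          rw [hdec]; rfl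
        rw [← List.length_flatten]
        rw [List.length_finRange] at hlen
        omega
      exact ⟨hpos, hsum, hdec⟩
    have hlens : ∀ t : Term n,
        (t.lmFactors.map fun u => u.leaves.length) = (t.lmFactors.map Term.leaves).map List.length := by
      intro t
      rw [List.map_map]
      rfl
    set Sb := {f : (Fin n → G) → G | ∃ t : Term n, t.IsBracketing ∧ f = fun h => t.eval op h} with hSb
    set φ2 : ((Fin n → G) → G) → Finset ℕ := fun g =>
      if hg : ∃ t : Term n, t.IsBracketing ∧ g = fun h => t.eval op h then
        (cuts (hg.choose.lmFactors.map fun u => u.leaves.length)).toFinset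
      else ∅ with hφ2
    have hb : Sb.ncard ≤ (↑T.powerset : Set (Finset ℕ)).ncard := by
      refine Set.ncard_le_ncard_of_injOn φ2 ?_ ?_ (T.powerset.finite_toSet)
      · intro g hg
        have hg' : ∃ t : Term n, t.IsBracketing ∧ g = fun h => t.eval op h := hg
        rw [hφ2]
        simp only [dif_pos hg']
        obtain ⟨hpos, hsum, _⟩ := hfacts _ hg'.choose_spec.1
        simp only [Finset.mem_coe, Finset.mem_powerset]
        intro c hc
        rw [List.mem_toFinset, hlens] at hc
        have := cuts_mem _ hpos c hc
        rw [hsum] at this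
        rw [hT, Finset.mem_Ico]
        exact this
      · intro g hg g' hg' heq
        haveI : IsAntisymm ℕ (· < ·) := ⟨fun a b hab hba => by omega⟩
        have e1 : ∃ t : Term n, t.IsBracketing ∧ g = fun h => t.eval op h := hg
        have e2 : ∃ t : Term n, t.IsBracketing ∧ g' = fun h => t.eval op h := hg'
        rw [hφ2] at heq
        simp only [dif_pos e1, dif_pos e2] at heq
        obtain ⟨hpos1, hsum1, hdec1⟩ := hfacts _ e1.choose_spec.1
        obtain ⟨hpos2, hsum2, hdec2⟩ := hfacts _ e2.choose_spec.1
        rw [hlens, hlens] at heq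
        have hcutseq : cuts ((e1.choose.lmFactors.map Term.leaves).map List.length) =
            cuts ((e2.choose.lmFactors.map Term.leaves).map List.length) := by
          have hs1 := cuts_sorted _ hpos1
          have hs2 := cuts_sorted _ hpos2
          exact List.Perm.eq_of_pairwise (fun a b _ _ hab hba => by omega) hs1 hs2
            (List.perm_of_nodup_nodup_toFinset_eq
              (hs1.imp (fun hl => ne_of_lt hl)) (hs2.imp (fun hl => ne_of_lt hl)) heq)
        have hleneq := cuts_inj _ _ hpos1 hpos2 (hsum1.trans hsum2.symm) hcutseq
        have hLLeq : e1.choose.lmFactors.map Term.leaves = e2.choose.lmFactors.map Term.leaves := by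
          refine chunks_eq _ _ ?_ hleneq
          have := hdec1.symm.trans hdec2
          exact (List.cons.injEq _ _ _ _ ▸ this).2
        have hlveq : e1.choose.leftVar = e2.choose.leftVar := by
          have := hdec1.symm.trans hdec2
          exact (List.cons.injEq _ _ _ _ ▸ this).1
        have hperm : (e1.choose.lmFactors.map fun u => u.leaves.toFinset).Perm
            (e2.choose.lmFactors.map fun u => u.leaves.toFinset) := by
          rw [Term.blocks_eq, Term.blocks_eq, hLLeq]
        have hlin1 : e1.choose.IsLinear := by
          rw [Term.IsLinear, e1.choose_spec.1]
        have hlin2 : e2.choose.IsLinear := by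
          rw [Term.IsLinear, e2.choose_spec.1]
        have heval := main1 op h1 h2 _ _ hlin1 hlin2 hlveq hperm
        rw [e1.choose_spec.2, e2.choose_spec.2]
        exact funext heval
    calc assocSpec op n = Sb.ncard := rfl
    _ ≤ (↑T.powerset : Set (Finset ℕ)).ncard := hb
    _ = T.powerset.card := Set.ncard_coe_finset _
    _ = 2 ^ T.card := Finset.card_powerset T
    _ = 2 ^ (n - 2) := by
        rw [hT, Nat.card_Ico]
        congr 1
end

section
/- Let (G,*) be a groupoid satisfying the identity w*(x*(y*z)) = w*((x*y)*z). Then for any term decomposed as t = [t_0, t_1, …, t_m] (leftmost decomposition with t_0 a single variable), t induces the same operation on G as [t_0, t_1^R, …, t_m^R], where t_i^R is the rightmost bracketing of the variables of t_i in the same left-to-right order as they occur in t_i. -/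
/-- Rightmost bracketing of the variables of a term, in their left-to-right order. -/
def Term.rightified {n : ℕ} (t : Term n) : Term n :=
  match t.leaves with
  | [] => t
  | i :: l => rmBr i l

section Aux

variable {n : ℕ} {G : Type*} (op : G → G → G) (h : Fin n → G)

lemma leaves_eq_aux (t : Term n) : t.leaves = t.leftVar :: t.leaves.tail := by
  induction t with
  | var i => rfl
  | mul s t ihs iht =>
    show s.leaves ++ t.leaves = s.leftVar :: (s.leaves ++ t.leaves).tail
    rw [ihs]
    rfl

lemma rightified_eq_aux (t : Term n) : t.rightified = rmBr t.leftVar t.leaves.tail := by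
  have hl := leaves_eq_aux t
  unfold Term.rightified
  split
  · next heq => rw [heq] at hl; exact absurd hl (by simp)
  · next i l heq =>
    rw [heq] at hl
    injection hl with h1 h2
    rw [heq, ← h1]
    rfl

lemma key_aux (hid : ∀ w x y z : G, op w (op x (op y z)) = op w (op (op x y) z))
    (a : Term n) : ∀ (j : Fin n) (l : List (Fin n)) (w : G),
    op w (op (a.eval op h) ((rmBr j l).eval op h)) =
      op w ((rmBr a.leftVar (a.leaves.tail ++ j :: l)).eval op h) := by
  induction a with
  | var i => intro j l w; rfl
  | mul s t ihs iht =>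
    intro j l w
    have h1 : op w (op ((s.mul t).eval op h) ((rmBr j l).eval op h))
        = op w (op (s.eval op h) (op (t.eval op h) ((rmBr j l).eval op h))) :=
      (hid _ _ _ _).symm
    rw [h1, congrArg (op w) (iht j l (s.eval op h)),
      ihs t.leftVar (t.leaves.tail ++ j :: l) w]
    have h2 : s.leaves.tail ++ t.leftVar :: (t.leaves.tail ++ j :: l)
        = ((s.mul t).leaves.tail ++ j :: l) := by
      show _ = (s.leaves ++ t.leaves).tail ++ j :: l
      rw [leaves_eq_aux s, leaves_eq_aux t]
      simp
    rw [h2]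
    rfl

lemma key2_aux (hid : ∀ w x y z : G, op w (op x (op y z)) = op w (op (op x y) z))
    (t : Term n) : ∀ w : G,
    op w (t.eval op h) = op w ((rmBr t.leftVar t.leaves.tail).eval op h) := by
  induction t with
  | var i => intro w; rfl
  | mul s t ihs iht =>
    intro w
    show op w (op (s.eval op h) (t.eval op h)) = _
    rw [congrArg (op w) (iht (s.eval op h)),
      key_aux op h hid s t.leftVar t.leaves.tail w]
    have h2 : s.leaves.tail ++ t.leftVar :: t.leaves.tail
        = (s.mul t).leaves.tail := by
      show _ = (s.leaves ++ t.leaves).tail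
      rw [leaves_eq_aux s, leaves_eq_aux t]
      simp
    rw [h2]
    rfl

end Aux

/-- If `w(x(yz)) ≈ w((xy)z)` holds, then `t = [t_0, t_1, …, t_m]` induces the same
operation as `[t_0, t_1^R, …, t_m^R]`. -/
theorem eval_eq_rightified_factors {G : Type*} (op : G → G → G)
    (hid : ∀ w x y z : G, op w (op x (op y z)) = op w (op (op x y) z))
    {n : ℕ} (t : Term n) (h : Fin n → G) :
    t.eval op h = (lmBr (Term.var t.leftVar) (t.lmFactors.map Term.rightified)).eval op h := by
  induction t with
  | var i => rfl
  | mul s t ihs iht =>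
    show op (s.eval op h) (t.eval op h) = _
    have hfac : (s.mul t).lmFactors.map Term.rightified
        = s.lmFactors.map Term.rightified ++ [t.rightified] := by
      show ((s.lmFactors ++ [t]).map Term.rightified) = _
      simp
    rw [hfac]
    show _ = (lmBr (Term.var s.leftVar)
        (s.lmFactors.map Term.rightified ++ [t.rightified])).eval op h
    unfold lmBr
    rw [List.foldl_append]
    show _ = op ((lmBr (Term.var s.leftVar) (s.lmFactors.map Term.rightified)).eval op h)
      (t.rightified.eval op h)
    rw [← ihs, rightified_eq_aux, ← key2_aux op h hid t (s.eval op h)]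
end

section
/- Let (G,*) be a groupoid satisfying the identities x*y = y*x and ((w*x)*y)*z = ((w*x)*z)*y. If two full linear terms s, t over x_1,…,x_n (n ≥ 2) have the same set of egg-pairs (the unordered pairs of variables {x_i, x_j} such that x_i x_j or x_j x_i occurs as a subterm at the bottom of a maximal nest), then s^* = t^*. Consequently the number of distinct n-ary operations induced by full linear terms on G is at most B_{n,2} − 1, where B_{n,2} is the number of partitions of {1,…,n} into blocks of size at most 2. -/
section Groupoid
variable {G : Type*} (op : G → G → G)
  (hcomm : ∀ x y : G, op x y = op y x)
  (hid : ∀ w x y z : G, op (op (op w x) y) z = op (op (op w x) z) y)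

include hcomm hid in

lemma lemA (a u v c : G) : op a (op (op u v) c) = op (op a (op u v)) c := by
  rw [hcomm a, hid, hcomm (op u v) a]

include hcomm hid in
lemma lemM : ∀ (l : List G) (a u v : G),
    op a (List.foldl op (op u v) l) = List.foldl op (op a (op u v)) l := by
  intro l
  induction l with
  | nil => intros; rfl
  | cons c l ih =>
    intro a u v
    simp only [List.foldl_cons]
    rw [ih a (op u v) c, lemA op hcomm hid]

include hcomm hid in
lemma lemMERGE (a b c d : G) (l1 l2 : List G) :
    op (List.foldl op (op a b) l1) (List.foldl op (op c d) l2)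
      = List.foldl op (op (op a b) (op c d)) (l1 ++ l2) := by
  rw [lemM op hcomm hid l2, hcomm _ (op c d), lemM op hcomm hid l1,
    hcomm (op c d) (op a b), ← List.foldl_append]

include hid in
lemma lemPERM : ∀ {l l' : List G}, l.Perm l' → ∀ u v : G,
    List.foldl op (op u v) l = List.foldl op (op u v) l' := by
  intro l l' hp
  induction hp with
  | nil => intros; rfl
  | cons x _ ih => intro u v; simp only [List.foldl_cons]; exact ih (op u v) x
  | swap x y l => intro u v; simp only [List.foldl_cons]; rw [hid u v y x]
  | trans _ _ ih1 ih2 => intro u v; rw [ih1, ih2]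

include hcomm hid in
lemma lemHEADS (p q p' q' : G) (l l' : List G)
    (hp : (op p q :: l).Perm (op p' q' :: l')) :
    List.foldl op (op p q) l = List.foldl op (op p' q') l' := by
  letI : DecidableEq G := Classical.decEq G
  by_cases hcc : op p q = op p' q'
  · rw [hcc] at hp ⊢
    exact lemPERM op hid (hp.cons_inv) p' q'
  · have hc'mem : op p' q' ∈ l := by
      have : op p' q' ∈ op p q :: l := hp.symm.subset List.mem_cons_self
      rcases List.mem_cons.1 this with h | h
      · exact absurd h.symm hcc
      · exact h
    have hcmem : op p q ∈ l' := by
      have : op p q ∈ op p' q' :: l' := hp.subset List.mem_cons_self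
      rcases List.mem_cons.1 this with h | h
      · exact absurd h hcc
      · exact h
    have h1 : l.Perm (op p' q' :: l.erase (op p' q')) := List.perm_cons_erase hc'mem
    have h2 : l'.Perm (op p q :: l'.erase (op p q)) := List.perm_cons_erase hcmem
    have h3 : (l.erase (op p' q')).Perm (l'.erase (op p q)) := by
      have ha : (op p' q' :: l').Perm (op p' q' :: op p q :: l.erase (op p' q')) :=
        hp.symm.trans ((h1.cons (op p q)).trans (List.Perm.swap _ _ _))
      have hb : l'.Perm (op p q :: l.erase (op p' q')) := ha.cons_inv
      exact ((h2.symm.trans hb).cons_inv).symm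
    calc List.foldl op (op p q) l
        = List.foldl op (op p q) (op p' q' :: l.erase (op p' q')) := lemPERM op hid h1 p q
      _ = List.foldl op (op (op p q) (op p' q')) (l.erase (op p' q')) := rfl
      _ = List.foldl op (op (op p q) (op p' q')) (l'.erase (op p q)) :=
          lemPERM op hid h3 (op p q) (op p' q')
      _ = List.foldl op (op (op p' q') (op p q)) (l'.erase (op p q)) := by rw [hcomm]
      _ = List.foldl op (op p' q') (op p q :: l'.erase (op p q)) := rfl
      _ = List.foldl op (op p' q') l' := (lemPERM op hid h2 p' q').symm

end Groupoid
namespace AuxAC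

variable {n : ℕ} {G : Type*}

open List

/-- List of "factor values" of a term. -/
def factorList (op : G → G → G) (h : Fin n → G) : Term n → List G
  | .var i => [h i]
  | .mul (.var i) (.var j) => [op (h i) (h j)]
  | .mul (.var i) (.mul t1 t2) => h i :: factorList op h (.mul t1 t2)
  | .mul (.mul s1 s2) (.var j) => factorList op h (.mul s1 s2) ++ [h j]
  | .mul (.mul s1 s2) (.mul t1 t2) =>
      factorList op h (.mul s1 s2) ++ factorList op h (.mul t1 t2)

/-- List of egg pairs of a term, with multiplicity, as 2-element finsets. -/
def eggL : Term n → List (Finset (Fin n))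
  | .var _ => []
  | .mul (.var i) (.var j) => [({i, j} : Finset (Fin n))]
  | .mul (.var _) (.mul t1 t2) => eggL (Term.mul t1 t2)
  | .mul (.mul s1 s2) (.var _) => eggL (Term.mul s1 s2)
  | .mul (.mul s1 s2) (.mul t1 t2) => eggL (Term.mul s1 s2) ++ eggL (Term.mul t1 t2)

/-- List of non-egg (singleton) variables of a term. -/
def singles : Term n → List (Fin n)
  | .var i => [i]
  | .mul (.var _) (.var _) => []
  | .mul (.var i) (.mul t1 t2) => i :: singles (Term.mul t1 t2)
  | .mul (.mul s1 s2) (.var j) => singles (Term.mul s1 s2) ++ [j]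
  | .mul (.mul s1 s2) (.mul t1 t2) => singles (Term.mul s1 s2) ++ singles (Term.mul t1 t2)

theorem main_decomp (op : G → G → G)
    (hcomm : ∀ x y : G, op x y = op y x)
    (hid : ∀ w x y z : G, op (op (op w x) y) z = op (op (op w x) z) y)
    (h : Fin n → G) :
    ∀ (t : Term n) (s u : Term n), t = Term.mul s u →
    ∃ (p q : G) (l : List G), (op p q :: l).Perm (factorList op h t) ∧
      t.eval op h = List.foldl op (op p q) l := by
  intro t
  induction t with
  | var i => intro s u heq; cases heq
  | mul s u ihs ihu =>
    intro _ _ _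
    cases s with
    | var i =>
      cases u with
      | var j =>
        exact ⟨h i, h j, [], List.Perm.refl _, rfl⟩
      | mul u1 u2 =>
        obtain ⟨p, q, l, hperm, heval⟩ := ihu u1 u2 rfl
        refine ⟨p, q, l ++ [h i], ?_, ?_⟩
        · calc (op p q :: (l ++ [h i])) = (op p q :: l) ++ [h i] := rfl
            _ ~ factorList op h (Term.mul u1 u2) ++ [h i] := hperm.append_right _
            _ ~ [h i] ++ factorList op h (Term.mul u1 u2) := List.perm_append_comm
            _ = factorList op h (Term.mul (Term.var i) (Term.mul u1 u2)) := rfl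
        · show op (h i) ((Term.mul u1 u2).eval op h) = _
          rw [heval, hcomm, List.foldl_append]
          rfl
    | mul s1 s2 =>
      obtain ⟨p, q, l, hperm, heval⟩ := ihs s1 s2 rfl
      cases u with
      | var j =>
        refine ⟨p, q, l ++ [h j], ?_, ?_⟩
        · calc (op p q :: (l ++ [h j])) = (op p q :: l) ++ [h j] := rfl
            _ ~ factorList op h (Term.mul s1 s2) ++ [h j] := hperm.append_right _
        · show op ((Term.mul s1 s2).eval op h) (h j) = _
          rw [heval, List.foldl_append]
          rfl
      | mul u1 u2 =>
        obtain ⟨r, w, l2, hperm2, heval2⟩ := ihu u1 u2 rfl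
        refine ⟨p, q, op r w :: (l ++ l2), ?_, ?_⟩
        · calc (op p q :: op r w :: (l ++ l2))
              ~ op p q :: (l ++ op r w :: l2) := (List.perm_middle.symm).cons _
            _ = (op p q :: l) ++ (op r w :: l2) := rfl
            _ ~ factorList op h (Term.mul s1 s2) ++ factorList op h (Term.mul u1 u2) :=
                hperm.append hperm2
        · show op ((Term.mul s1 s2).eval op h) ((Term.mul u1 u2).eval op h) = _
          rw [heval, heval2, lemMERGE op hcomm hid]
          rfl

end AuxAC
namespace AuxAC
open List

variable {n : ℕ} {G : Type*}

lemma singles_subset : ∀ (t : Term n), ∀ x ∈ singles t, x ∈ t.leaves := by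
  intro t
  induction t with
  | var i => intro x hx; exact hx
  | mul s u ihs ihu =>
    cases s with
    | var i =>
      cases u with
      | var j => intro x hx; exact absurd hx List.not_mem_nil
      | mul u1 u2 =>
        intro x hx
        rcases List.mem_cons.1 hx with rfl | hx
        · exact List.mem_append_left _ (List.mem_singleton_self x)
        · exact List.mem_append_right _ (ihu x hx)
    | mul s1 s2 =>
      cases u with
      | var j =>
        intro x hx
        rcases List.mem_append.1 hx with hx | hx
        · exact List.mem_append_left _ (ihs x hx)
        · exact List.mem_append_right _ hx
      | mul u1 u2 =>
        intro x hx
        rcases List.mem_append.1 hx with hx | hx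
        · exact List.mem_append_left _ (ihs x hx)
        · exact List.mem_append_right _ (ihu x hx)

lemma eggL_subset : ∀ (t : Term n), ∀ e ∈ eggL t, ∀ x ∈ e, x ∈ t.leaves := by
  intro t
  induction t with
  | var i => intro e he; exact absurd he List.not_mem_nil
  | mul s u ihs ihu =>
    cases s with
    | var i =>
      cases u with
      | var j =>
        intro e he x hx
        simp only [eggL, List.mem_singleton] at he
        subst he
        rcases Finset.mem_insert.1 hx with rfl | hx
        · exact List.mem_append_left _ (List.mem_singleton_self x)
        · rw [Finset.mem_singleton] at hx; subst hx
          exact List.mem_append_right _ (List.mem_singleton_self x)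
      | mul u1 u2 =>
        intro e he x hx
        exact List.mem_append_right _ (ihu e he x hx)
    | mul s1 s2 =>
      cases u with
      | var j =>
        intro e he x hx
        exact List.mem_append_left _ (ihs e he x hx)
      | mul u1 u2 =>
        intro e he x hx
        rcases List.mem_append.1 he with he | he
        · exact List.mem_append_left _ (ihs e he x hx)
        · exact List.mem_append_right _ (ihu e he x hx)

lemma eggL_card : ∀ (t : Term n), t.leaves.Nodup → ∀ e ∈ eggL t, e.card = 2 := by
  intro t
  induction t with
  | var i => intro _ e he; exact absurd he List.not_mem_nil
  | mul s u ihs ihu =>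
    intro hnd
    have hnds : s.leaves.Nodup := (List.nodup_append.1 hnd).1
    have hndu : u.leaves.Nodup := (List.nodup_append.1 hnd).2.1
    cases s with
    | var i =>
      cases u with
      | var j =>
        intro e he
        simp only [eggL, List.mem_singleton] at he
        subst he
        have hij : i ≠ j := by
          have := (List.nodup_append.1 hnd).2.2
          intro hEq; exact this i (List.mem_singleton_self i) j (List.mem_singleton_self j) hEq
        rw [Finset.card_insert_of_notMem (by simp [hij]), Finset.card_singleton]
      | mul u1 u2 => exact ihu hndu
    | mul s1 s2 =>
      cases u with
      | var j => exact ihs hnds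
      | mul u1 u2 =>
        intro e he
        rcases List.mem_append.1 he with he | he
        · exact ihs hnds e he
        · exact ihu hndu e he

lemma eggL_ne_nil : ∀ t : Term n, ∀ s u, t = Term.mul s u → eggL t ≠ [] := by
  intro t
  induction t with
  | var i => intro s u h; cases h
  | mul s u ihs ihu =>
    intro _ _ _
    cases s with
    | var i =>
      cases u with
      | var j => simp [eggL]
      | mul u1 u2 => exact ihu u1 u2 rfl
    | mul s1 s2 =>
      cases u with
      | var j => exact ihs s1 s2 rfl
      | mul u1 u2 =>
        intro hx
        exact ihs s1 s2 rfl (List.append_eq_nil_iff.1 hx).1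

end AuxAC
namespace AuxAC
open List

variable {n : ℕ}

lemma singles_char : ∀ (t : Term n), t.leaves.Nodup →
    ∀ x, x ∈ singles t ↔ (x ∈ t.leaves ∧ ∀ e ∈ eggL t, x ∉ e) := by
  intro t
  induction t with
  | var i => intro _ x; simp [singles, eggL, Term.leaves]
  | mul s u ihs ihu =>
    intro hnd
    have hnds : s.leaves.Nodup := (List.nodup_append.1 hnd).1
    have hndu : u.leaves.Nodup := (List.nodup_append.1 hnd).2.1
    have hdisj : s.leaves.Disjoint u.leaves :=
      fun _ ha hb => (List.nodup_append.1 hnd).2.2 _ ha _ hb rfl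
    have key : ∀ x, x ∈ Term.leaves (Term.mul s u) ↔ x ∈ s.leaves ∨ x ∈ u.leaves := by
      intro x; exact List.mem_append
    cases s with
    | var i =>
      cases u with
      | var j =>
        intro x
        constructor
        · intro hx; exact absurd hx List.not_mem_nil
        · rintro ⟨hx, hno⟩
          exfalso
          apply hno {i, j} (List.mem_singleton_self _)
          rcases List.mem_append.1 hx with hx | hx <;>
            simp only [Term.leaves, List.mem_singleton] at hx <;> simp [hx]
      | mul u1 u2 =>
        intro x
        have hiu : i ∉ (Term.mul u1 u2).leaves := fun hx => hdisj (List.mem_singleton_self i) hx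
        constructor
        · intro hx
          rcases List.mem_cons.1 hx with rfl | hx
          · refine ⟨List.mem_append_left _ (List.mem_singleton_self x), ?_⟩
            intro e he hxe
            exact hiu (eggL_subset (Term.mul u1 u2) e he x hxe)
          · obtain ⟨h1, h2⟩ := (ihu hndu x).1 hx
            exact ⟨List.mem_append_right _ h1, h2⟩
        · rintro ⟨hx, hno⟩
          rcases List.mem_append.1 hx with hx | hx
          · simp only [Term.leaves, List.mem_singleton] at hx
            subst hx
            exact List.mem_cons_self
          · exact List.mem_cons_of_mem _ ((ihu hndu x).2 ⟨hx, hno⟩)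
    | mul s1 s2 =>
      cases u with
      | var j =>
        intro x
        have hju : j ∉ (Term.mul s1 s2).leaves := fun hx => hdisj hx (List.mem_singleton_self j)
        constructor
        · intro hx
          rcases List.mem_append.1 hx with hx | hx
          · obtain ⟨h1, h2⟩ := (ihs hnds x).1 hx
            exact ⟨List.mem_append_left _ h1, h2⟩
          · simp only [List.mem_singleton] at hx
            subst hx
            refine ⟨List.mem_append_right _ (List.mem_singleton_self x), ?_⟩
            intro e he hxe
            exact hju (eggL_subset (Term.mul s1 s2) e he x hxe)
        · rintro ⟨hx, hno⟩
          rcases List.mem_append.1 hx with hx | hx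
          · exact List.mem_append_left _ ((ihs hnds x).2 ⟨hx, hno⟩)
          · simp only [Term.leaves, List.mem_singleton] at hx
            subst hx
            exact List.mem_append_right _ (List.mem_singleton_self x)
      | mul u1 u2 =>
        intro x
        constructor
        · intro hx
          rcases List.mem_append.1 hx with hx | hx
          · obtain ⟨h1, h2⟩ := (ihs hnds x).1 hx
            refine ⟨List.mem_append_left _ h1, ?_⟩
            intro e he hxe
            rcases List.mem_append.1 he with he | he
            · exact h2 e he hxe
            · exact hdisj h1 (eggL_subset _ e he x hxe)
          · obtain ⟨h1, h2⟩ := (ihu hndu x).1 hx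
            refine ⟨List.mem_append_right _ h1, ?_⟩
            intro e he hxe
            rcases List.mem_append.1 he with he | he
            · exact hdisj (eggL_subset _ e he x hxe) h1
            · exact h2 e he hxe
        · rintro ⟨hx, hno⟩
          rcases List.mem_append.1 hx with hx | hx
          · refine List.mem_append_left _ ((ihs hnds x).2 ⟨hx, ?_⟩)
            intro e he; exact hno e (List.mem_append_left _ he)
          · refine List.mem_append_right _ ((ihu hndu x).2 ⟨hx, ?_⟩)
            intro e he; exact hno e (List.mem_append_right _ he)

lemma singles_nodup : ∀ (t : Term n), t.leaves.Nodup → (singles t).Nodup := by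
  intro t
  induction t with
  | var i => intro _; exact List.nodup_singleton i
  | mul s u ihs ihu =>
    intro hnd
    have hnds : s.leaves.Nodup := (List.nodup_append.1 hnd).1
    have hndu : u.leaves.Nodup := (List.nodup_append.1 hnd).2.1
    have hdisj : s.leaves.Disjoint u.leaves :=
      fun _ ha hb => (List.nodup_append.1 hnd).2.2 _ ha _ hb rfl
    cases s with
    | var i =>
      cases u with
      | var j => exact List.nodup_nil
      | mul u1 u2 =>
        refine List.Nodup.cons ?_ (ihu hndu)
        intro hx
        exact hdisj (List.mem_singleton_self i) (singles_subset _ i hx)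
    | mul s1 s2 =>
      cases u with
      | var j =>
        show List.Nodup (singles (Term.mul s1 s2) ++ [j])
        rw [List.nodup_append]
        refine ⟨ihs hnds, List.nodup_singleton j, ?_⟩
        intro x hx y hy hxy
        rw [List.mem_singleton] at hy
        subst hy; subst hxy
        exact hdisj (singles_subset _ _ hx) (List.mem_singleton_self _)
      | mul u1 u2 =>
        show List.Nodup (singles (Term.mul s1 s2) ++ singles (Term.mul u1 u2))
        rw [List.nodup_append]
        refine ⟨ihs hnds, ihu hndu, ?_⟩
        intro x hx y hy hxy
        subst hxy
        exact hdisj (singles_subset _ _ hx) (singles_subset _ _ hy)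

lemma eggL_nodup : ∀ (t : Term n), t.leaves.Nodup → (eggL t).Nodup := by
  intro t
  induction t with
  | var i => intro _; exact List.nodup_nil
  | mul s u ihs ihu =>
    intro hnd
    have hnds : s.leaves.Nodup := (List.nodup_append.1 hnd).1
    have hndu : u.leaves.Nodup := (List.nodup_append.1 hnd).2.1
    have hdisj : s.leaves.Disjoint u.leaves :=
      fun _ ha hb => (List.nodup_append.1 hnd).2.2 _ ha _ hb rfl
    cases s with
    | var i =>
      cases u with
      | var j => exact List.nodup_singleton _
      | mul u1 u2 => exact ihu hndu
    | mul s1 s2 =>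
      cases u with
      | var j => exact ihs hnds
      | mul u1 u2 =>
        show List.Nodup (eggL (Term.mul s1 s2) ++ eggL (Term.mul u1 u2))
        rw [List.nodup_append]
        refine ⟨ihs hnds, ihu hndu, ?_⟩
        intro e he e2 he' hee
        subst hee
        have hcard := eggL_card _ hnds e he
        have hne : e.Nonempty := Finset.card_pos.1 (by omega)
        obtain ⟨x, hx⟩ := hne
        exact hdisj (eggL_subset _ e he x hx) (eggL_subset _ e he' x hx)

lemma eggL_pairwise_disjoint : ∀ (t : Term n), t.leaves.Nodup →
    ∀ e ∈ eggL t, ∀ e' ∈ eggL t, e ≠ e' → Disjoint e e' := by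
  intro t
  induction t with
  | var i => intro _ e he; exact absurd he List.not_mem_nil
  | mul s u ihs ihu =>
    intro hnd
    have hnds : s.leaves.Nodup := (List.nodup_append.1 hnd).1
    have hndu : u.leaves.Nodup := (List.nodup_append.1 hnd).2.1
    have hdisj : s.leaves.Disjoint u.leaves :=
      fun _ ha hb => (List.nodup_append.1 hnd).2.2 _ ha _ hb rfl
    have cross : ∀ e ∈ eggL s, ∀ e' ∈ eggL u, Disjoint e e' := by
      intro e he e' he'
      rw [Finset.disjoint_left]
      intro x hx hx'
      exact hdisj (eggL_subset _ e he x hx) (eggL_subset _ e' he' x hx')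
    cases s with
    | var i =>
      cases u with
      | var j =>
        intro e he e' he' hne
        simp only [eggL, List.mem_singleton] at he he'
        subst he; subst he'
        exact absurd rfl hne
      | mul u1 u2 => exact ihu hndu
    | mul s1 s2 =>
      cases u with
      | var j => exact ihs hnds
      | mul u1 u2 =>
        intro e he e' he' hne
        rcases List.mem_append.1 he with he | he <;>
          rcases List.mem_append.1 he' with he' | he'
        · exact ihs hnds e he e' he' hne
        · exact cross e he e' he'
        · exact (cross e' he' e he).symm
        · exact ihu hndu e he e' he' hne

lemma eggs_eq : ∀ (t : Term n), t.eggs = (eggL t).toFinset := by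
  intro t
  induction t with
  | var i => rfl
  | mul s u ihs ihu =>
    cases s with
    | var i =>
      cases u with
      | var j => simp [Term.eggs, eggL]
      | mul u1 u2 =>
        show Term.eggs (Term.var i) ∪ Term.eggs (Term.mul u1 u2) = _
        rw [ihu]
        show ∅ ∪ _ = _
        simp [eggL]
    | mul s1 s2 =>
      cases u with
      | var j =>
        show Term.eggs (Term.mul s1 s2) ∪ Term.eggs (Term.var j) = _
        rw [ihs]
        show _ ∪ ∅ = _
        simp [eggL]
      | mul u1 u2 =>
        show Term.eggs (Term.mul s1 s2) ∪ Term.eggs (Term.mul u1 u2) = _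
        rw [ihs, ihu]
        show _ = ((eggL (Term.mul s1 s2)) ++ (eggL (Term.mul u1 u2))).toFinset
        rw [List.toFinset_append]

end AuxAC
namespace AuxAC
open List

variable {n : ℕ} {G : Type*}

/-- canonical value of an egg pair -/
noncomputable def pairVal (op : G → G → G) (h : Fin n → G) (g0 : G) (e : Finset (Fin n)) : G :=
  if hne : e.Nonempty then op (h (e.min' hne)) (h (e.max' hne)) else g0

lemma pairVal_pair (op : G → G → G) (hcomm : ∀ x y : G, op x y = op y x)
    (h : Fin n → G) (g0 : G) (i j : Fin n) (hij : i ≠ j) :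
    pairVal op h g0 {i, j} = op (h i) (h j) := by
  have hne : ({i, j} : Finset (Fin n)).Nonempty := ⟨i, Finset.mem_insert_self _ _⟩
  rw [pairVal, dif_pos hne]
  have hmin : ({i, j} : Finset (Fin n)).min' hne = min i j := by
    apply _root_.le_antisymm
    · exact le_min (Finset.min'_le _ i (by simp)) (Finset.min'_le _ j (by simp))
    · apply Finset.le_min'
      intro y hy
      rcases Finset.mem_insert.1 hy with rfl | hy
      · exact min_le_left _ _
      · rw [Finset.mem_singleton] at hy; subst hy; exact min_le_right _ _
  have hmax : ({i, j} : Finset (Fin n)).max' hne = max i j := by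
    apply _root_.le_antisymm
    · apply Finset.max'_le
      intro y hy
      rcases Finset.mem_insert.1 hy with rfl | hy
      · exact le_max_left _ _
      · rw [Finset.mem_singleton] at hy; subst hy; exact le_max_right _ _
    · exact max_le (Finset.le_max' _ i (by simp)) (Finset.le_max' _ j (by simp))
  rw [hmin, hmax]
  rcases lt_or_gt_of_ne hij with hlt | hlt
  · rw [min_eq_left hlt.le, max_eq_right hlt.le]
  · rw [min_eq_right hlt.le, max_eq_left hlt.le, hcomm]

lemma factor_perm (op : G → G → G) (hcomm : ∀ x y : G, op x y = op y x)
    (h : Fin n → G) (g0 : G) :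
    ∀ t : Term n, t.leaves.Nodup →
      (factorList op h t).Perm
        ((eggL t).map (pairVal op h g0) ++ (singles t).map h) := by
  intro t
  induction t with
  | var i => intro _; exact List.Perm.refl _
  | mul s u ihs ihu =>
    intro hnd
    have hnds : s.leaves.Nodup := (List.nodup_append.1 hnd).1
    have hndu : u.leaves.Nodup := (List.nodup_append.1 hnd).2.1
    have hdisj : s.leaves.Disjoint u.leaves :=
      fun _ ha hb => (List.nodup_append.1 hnd).2.2 _ ha _ hb rfl
    cases s with
    | var i =>
      cases u with
      | var j =>
        have hij : i ≠ j := fun hEq =>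
          hdisj (List.mem_singleton_self i) (hEq ▸ List.mem_singleton_self i)
        show [op (h i) (h j)].Perm ([pairVal op h g0 {i, j}] ++ [])
        rw [pairVal_pair op hcomm h g0 i j hij]
        exact List.Perm.refl _
      | mul u1 u2 =>
        have ih := ihu hndu
        calc factorList op h (Term.mul (Term.var i) (Term.mul u1 u2))
            = h i :: factorList op h (Term.mul u1 u2) := rfl
          _ ~ h i :: ((eggL (Term.mul u1 u2)).map (pairVal op h g0)
                ++ (singles (Term.mul u1 u2)).map h) := ih.cons _
          _ ~ (eggL (Term.mul u1 u2)).map (pairVal op h g0)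
                ++ h i :: (singles (Term.mul u1 u2)).map h := List.perm_middle.symm
    | mul s1 s2 =>
      cases u with
      | var j =>
        have ih := ihs hnds
        calc factorList op h (Term.mul (Term.mul s1 s2) (Term.var j))
            = factorList op h (Term.mul s1 s2) ++ [h j] := rfl
          _ ~ ((eggL (Term.mul s1 s2)).map (pairVal op h g0)
                ++ (singles (Term.mul s1 s2)).map h) ++ [h j] := ih.append_right _
          _ = (eggL (Term.mul s1 s2)).map (pairVal op h g0)
                ++ ((singles (Term.mul s1 s2)).map h ++ [h j]) := List.append_assoc _ _ _
          _ = (eggL (Term.mul s1 s2)).map (pairVal op h g0)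
                ++ ((singles (Term.mul s1 s2) ++ [j]).map h) := by simp
      | mul u1 u2 =>
        have ih1 := ihs hnds
        have ih2 := ihu hndu
        have rearr : ∀ (a b c d : List G), ((a ++ b) ++ (c ++ d)).Perm ((a ++ c) ++ (b ++ d)) := by
          intro a b c d
          calc (a ++ b) ++ (c ++ d) = a ++ (b ++ (c ++ d)) := by rw [List.append_assoc]
            _ ~ a ++ (c ++ (b ++ d)) := by
                refine List.Perm.append_left a ?_
                calc b ++ (c ++ d) = (b ++ c) ++ d := (List.append_assoc _ _ _).symm
                  _ ~ (c ++ b) ++ d := List.perm_append_comm.append_right d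
                  _ = c ++ (b ++ d) := List.append_assoc _ _ _
            _ = (a ++ c) ++ (b ++ d) := (List.append_assoc _ _ _).symm
        calc factorList op h (Term.mul (Term.mul s1 s2) (Term.mul u1 u2))
            = factorList op h (Term.mul s1 s2) ++ factorList op h (Term.mul u1 u2) := rfl
          _ ~ ((eggL (Term.mul s1 s2)).map (pairVal op h g0)
                ++ (singles (Term.mul s1 s2)).map h)
              ++ ((eggL (Term.mul u1 u2)).map (pairVal op h g0)
                ++ (singles (Term.mul u1 u2)).map h) := ih1.append ih2
          _ ~ ((eggL (Term.mul s1 s2)).map (pairVal op h g0)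
                ++ (eggL (Term.mul u1 u2)).map (pairVal op h g0))
              ++ ((singles (Term.mul s1 s2)).map h
                ++ (singles (Term.mul u1 u2)).map h) := rearr _ _ _ _
          _ = (eggL (Term.mul (Term.mul s1 s2) (Term.mul u1 u2))).map (pairVal op h g0)
              ++ (singles (Term.mul (Term.mul s1 s2) (Term.mul u1 u2))).map h := by
                show _ = (eggL (Term.mul s1 s2) ++ eggL (Term.mul u1 u2)).map _
                  ++ ((singles (Term.mul s1 s2) ++ singles (Term.mul u1 u2)).map _)
                rw [List.map_append, List.map_append]

lemma part1 (op : G → G → G) (hcomm : ∀ x y : G, op x y = op y x)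
    (hid : ∀ w x y z : G, op (op (op w x) y) z = op (op (op w x) z) y)
    (hn : 2 ≤ n) (s t : Term n) (hs : s.IsLinear) (ht : t.IsLinear)
    (he : s.eggs = t.eggs) (h : Fin n → G) : s.eval op h = t.eval op h := by
  have g0 : G := h ⟨0, by omega⟩
  have hnds : s.leaves.Nodup := hs.nodup_iff.2 (List.nodup_finRange n)
  have hndt : t.leaves.Nodup := ht.nodup_iff.2 (List.nodup_finRange n)
  have hlens : s.leaves.length = n := hs.length_eq.trans List.length_finRange
  have hlent : t.leaves.length = n := ht.length_eq.trans List.length_finRange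
  obtain ⟨s1, s2, rfl⟩ : ∃ a b, s = Term.mul a b := by
    cases s with
    | var i => exfalso; simp [Term.leaves] at hlens; omega
    | mul a b => exact ⟨a, b, rfl⟩
  obtain ⟨t1, t2, rfl⟩ : ∃ a b, t = Term.mul a b := by
    cases t with
    | var i => exfalso; simp [Term.leaves] at hlent; omega
    | mul a b => exact ⟨a, b, rfl⟩
  set s := Term.mul s1 s2
  set t := Term.mul t1 t2
  have hEp : (eggL s).Perm (eggL t) :=
    List.perm_of_nodup_nodup_toFinset_eq (eggL_nodup s hnds) (eggL_nodup t hndt)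
      (by rw [← eggs_eq, ← eggs_eq, he])
  have hsing : (singles s).Perm (singles t) := by
    refine List.perm_of_nodup_nodup_toFinset_eq (singles_nodup s hnds) (singles_nodup t hndt) ?_
    ext x
    simp only [List.mem_toFinset]
    rw [singles_char s hnds x, singles_char t hndt x]
    constructor
    · rintro ⟨h1, h2⟩
      refine ⟨ht.mem_iff.2 (List.mem_finRange x), ?_⟩
      intro e heT
      exact h2 e (hEp.symm.subset heT)
    · rintro ⟨h1, h2⟩
      refine ⟨hs.mem_iff.2 (List.mem_finRange x), ?_⟩
      intro e heS
      exact h2 e (hEp.subset heS)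
  have hF : (factorList op h s).Perm (factorList op h t) :=
    ((factor_perm op hcomm h g0 s hnds).trans
      ((hEp.map _).append (hsing.map h))).trans (factor_perm op hcomm h g0 t hndt).symm
  obtain ⟨p, q, l, hperm, heval⟩ := main_decomp op hcomm hid h s s1 s2 rfl
  obtain ⟨p', q', l', hperm', heval'⟩ := main_decomp op hcomm hid h t t1 t2 rfl
  rw [heval, heval']
  exact lemHEADS op hcomm hid p q p' q' l l' (hperm.trans (hF.trans hperm'.symm))

end AuxAC
namespace AuxAC
open List

variable {n : ℕ}

def IsMatching (s : Finset (Fin n)) (E : Finset (Finset (Fin n))) : Prop :=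
  (∀ e ∈ E, e.card = 2 ∧ e ⊆ s) ∧ ∀ e ∈ E, ∀ e' ∈ E, e ≠ e' → Disjoint e e'

instance (s : Finset (Fin n)) : DecidablePred (IsMatching s) := fun _ => by
  unfold IsMatching; infer_instance

def matchings (s : Finset (Fin n)) : Finset (Finset (Finset (Fin n))) :=
  Finset.univ.filter (fun E => IsMatching s E)

lemma empty_isMatching (s : Finset (Fin n)) : IsMatching s ∅ := by
  constructor <;> intro e he <;> exact absurd he (Finset.notMem_empty e)

lemma mem_matchings {s : Finset (Fin n)} {E : Finset (Finset (Fin n))} :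
    E ∈ matchings s ↔ IsMatching s E := by
  simp [matchings]

lemma matchings_small {s : Finset (Fin n)} (hs : s.card ≤ 1) : matchings s = {∅} := by
  ext E
  rw [mem_matchings, Finset.mem_singleton]
  constructor
  · intro hE
    rw [Finset.eq_empty_iff_forall_notMem]
    intro e he
    have h2 := (hE.1 e he).1
    have h3 := Finset.card_le_card (hE.1 e he).2
    omega
  · rintro rfl; exact empty_isMatching s

lemma matchings_card : ∀ (k : ℕ) (s : Finset (Fin n)), s.card = k →
    (matchings s).card = bell2 k := by
  intro k
  induction k using Nat.strong_induction_on with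
  | _ k ih =>
    match k with
    | 0 =>
      intro s hs
      rw [matchings_small (by omega), Finset.card_singleton]
      rfl
    | 1 =>
      intro s hs
      rw [matchings_small (by omega), Finset.card_singleton]
      rfl
    | (m + 2) =>
      intro s hs
      obtain ⟨a, ha⟩ := Finset.card_pos.1 (by omega : 0 < s.card)
      set s' := s.erase a with hs'
      have hcs' : s'.card = m + 1 := by
        rw [hs', Finset.card_erase_of_mem ha, hs]
        omega
      -- every element of the image part is a matching of s
      have himage : ∀ b ∈ s', ∀ E' ∈ matchings (s'.erase b),
          IsMatching s (insert {a, b} E') := by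
        intro b hb E' hE'
        rw [mem_matchings] at hE'
        have hba : b ≠ a := (Finset.mem_erase.1 hb).1
        have hbs : b ∈ s := (Finset.mem_erase.1 hb).2
        have hsub : ∀ e ∈ E', e ⊆ s'.erase b := fun e he => (hE'.1 e he).2
        have havoid : ∀ e ∈ E', a ∉ e ∧ b ∉ e := by
          intro e he
          constructor
          · intro hae
            have := hsub e he hae
            exact (Finset.mem_erase.1 (Finset.mem_erase.1 this).2).1 rfl
          · intro hbe
            exact (Finset.mem_erase.1 (hsub e he hbe)).1 rfl
        constructor
        · intro e he
          rcases Finset.mem_insert.1 he with rfl | he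
          · exact ⟨Finset.card_pair (Ne.symm hba), by
              intro x hx
              rcases Finset.mem_insert.1 hx with rfl | hx
              · exact ha
              · rw [Finset.mem_singleton] at hx; subst hx; exact hbs⟩
          · refine ⟨(hE'.1 e he).1, ?_⟩
            refine ((hsub e he).trans ?_)
            exact (Finset.erase_subset _ _).trans (Finset.erase_subset _ _)
        · have hpairD : ∀ e' ∈ E', Disjoint ({a, b} : Finset (Fin n)) e' := by
            intro e' he'
            rw [Finset.disjoint_left]
            intro x hx
            rcases Finset.mem_insert.1 hx with h | h
            · exact fun hc => (havoid e' he').1 (h ▸ hc)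
            · rw [Finset.mem_singleton] at h
              exact fun hc => (havoid e' he').2 (h ▸ hc)
          intro e he e' he' hne
          rcases Finset.mem_insert.1 he with rfl | he <;>
            rcases Finset.mem_insert.1 he' with h' | he'
          · exact absurd h'.symm hne
          · exact hpairD e' he'
          · subst h'
            exact (hpairD e he).symm
          · exact hE'.2 e he e' he' hne
      have hdecomp : matchings s = matchings s' ∪
          s'.biUnion (fun b => (matchings (s'.erase b)).image (insert ({a, b} : Finset (Fin n)))) := by
        ext E
        rw [mem_matchings, Finset.mem_union, Finset.mem_biUnion]
        constructor
        · intro hE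
          by_cases hc : ∃ e ∈ E, a ∈ e
          · right
            obtain ⟨e, heE, hae⟩ := hc
            obtain ⟨x, y, hxy, hexy⟩ := Finset.card_eq_two.1 (hE.1 e heE).1
            have hab : ∃ b, b ≠ a ∧ e = {a, b} := by
              subst hexy
              rcases Finset.mem_insert.1 hae with rfl | hax
              · exact ⟨y, fun hc => hxy hc.symm, rfl⟩
              · rw [Finset.mem_singleton] at hax; subst hax
                exact ⟨x, fun hc => hxy hc, Finset.pair_comm x a⟩
            obtain ⟨b, hba, rfl⟩ := hab
            have hbs : b ∈ s := (hE.1 _ heE).2 (by simp)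
            have hbs' : b ∈ s' := Finset.mem_erase.2 ⟨hba, hbs⟩
            refine ⟨b, hbs', Finset.mem_image.2 ⟨E.erase {a, b}, ?_, ?_⟩⟩
            · rw [mem_matchings]
              constructor
              · intro e' he'
                have he'E : e' ∈ E := Finset.mem_of_mem_erase he'
                have hne : e' ≠ {a, b} := Finset.ne_of_mem_erase he'
                refine ⟨(hE.1 e' he'E).1, ?_⟩
                intro x hx
                have hxs : x ∈ s := (hE.1 e' he'E).2 hx
                have hdisj := hE.2 e' he'E {a, b} heE hne
                have hxa : x ≠ a := by
                  rintro rfl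
                  exact (Finset.disjoint_left.1 hdisj hx) (by simp)
                have hxb : x ≠ b := by
                  rintro rfl
                  exact (Finset.disjoint_left.1 hdisj hx) (by simp)
                exact Finset.mem_erase.2 ⟨hxb, Finset.mem_erase.2 ⟨hxa, hxs⟩⟩
              · intro e1 he1 e2 he2 hne
                exact hE.2 e1 (Finset.mem_of_mem_erase he1) e2 (Finset.mem_of_mem_erase he2) hne
            · exact Finset.insert_erase heE
          · left
            rw [mem_matchings]
            push_neg at hc
            refine ⟨?_, hE.2⟩
            intro e he
            refine ⟨(hE.1 e he).1, ?_⟩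
            intro x hx
            refine Finset.mem_erase.2 ⟨?_, (hE.1 e he).2 hx⟩
            rintro rfl
            exact hc e he hx
        · rintro (hE | ⟨b, hb, hEim⟩)
          · rw [mem_matchings] at hE
            refine ⟨?_, hE.2⟩
            intro e he
            exact ⟨(hE.1 e he).1, (hE.1 e he).2.trans (Finset.erase_subset _ _)⟩
          · obtain ⟨E', hE', rfl⟩ := Finset.mem_image.1 hEim
            exact himage b hb E' hE'
      have hpair_not_mem : ∀ b ∈ s', ∀ E' ∈ matchings (s'.erase b),
          ({a, b} : Finset (Fin n)) ∉ E' := by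
        intro b hb E' hE' hmem
        rw [mem_matchings] at hE'
        have := (hE'.1 _ hmem).2 (Finset.mem_insert_self a _)
        exact (Finset.mem_erase.1 (Finset.mem_erase.1 this).2).1 rfl
      have hdisj1 : Disjoint (matchings s')
          (s'.biUnion (fun b => (matchings (s'.erase b)).image (insert ({a, b} : Finset (Fin n))))) := by
        rw [Finset.disjoint_left]
        intro E hE1 hE2
        obtain ⟨b, hb, hEim⟩ := Finset.mem_biUnion.1 hE2
        obtain ⟨E', _, rfl⟩ := Finset.mem_image.1 hEim
        rw [mem_matchings] at hE1
        have hmem : ({a, b} : Finset (Fin n)) ∈ insert ({a, b} : Finset (Fin n)) E' :=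
          Finset.mem_insert_self _ _
        have := (hE1.1 _ hmem).2 (Finset.mem_insert_self a _)
        exact (Finset.mem_erase.1 this).1 rfl
      have hdisj2 : ∀ b ∈ s', ∀ c ∈ s', b ≠ c →
          Disjoint ((matchings (s'.erase b)).image (insert ({a, b} : Finset (Fin n))))
            ((matchings (s'.erase c)).image (insert ({a, c} : Finset (Fin n)))) := by
        intro b hb c hc hbc
        rw [Finset.disjoint_left]
        intro E hEb hEc
        obtain ⟨E1, hE1, rfl⟩ := Finset.mem_image.1 hEb
        obtain ⟨E2, hE2, hEq⟩ := Finset.mem_image.1 hEc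
        have hM : IsMatching s (insert ({a, b} : Finset (Fin n)) E1) := himage b hb E1 hE1
        have hmb : ({a, b} : Finset (Fin n)) ∈ insert ({a, b} : Finset (Fin n)) E1 :=
          Finset.mem_insert_self _ _
        have hmc : ({a, c} : Finset (Fin n)) ∈ insert ({a, b} : Finset (Fin n)) E1 := by
          rw [← hEq]; exact Finset.mem_insert_self _ _
        have hne : ({a, b} : Finset (Fin n)) ≠ ({a, c} : Finset (Fin n)) := by
          intro hEq2
          have : b ∈ ({a, c} : Finset (Fin n)) := hEq2 ▸ (by simp : b ∈ ({a, b} : Finset (Fin n)))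
          rcases Finset.mem_insert.1 this with rfl | hbc2
          · exact (Finset.mem_erase.1 hb).1 rfl
          · rw [Finset.mem_singleton] at hbc2; exact hbc hbc2
        have hdisj := hM.2 _ hmb _ hmc hne
        exact (Finset.disjoint_left.1 hdisj (by simp : a ∈ ({a, b} : Finset (Fin n)))) (by simp)
      have hinj : ∀ b ∈ s', Set.InjOn (insert ({a, b} : Finset (Fin n)))
          ((matchings (s'.erase b)) : Set (Finset (Finset (Fin n)))) := by
        intro b hb E1 hE1 E2 hE2 hEq
        have h1 := hpair_not_mem b hb E1 hE1
        have h2 := hpair_not_mem b hb E2 hE2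
        rw [← Finset.erase_insert h1, ← Finset.erase_insert h2, hEq]
      rw [hdecomp, Finset.card_union_of_disjoint hdisj1, Finset.card_biUnion hdisj2,
        ih (m + 1) (by omega) s' hcs']
      have hsum : ∀ b ∈ s',
          ((matchings (s'.erase b)).image (insert ({a, b} : Finset (Fin n)))).card = bell2 m := by
        intro b hb
        rw [Finset.card_image_of_injOn (hinj b hb), ih m (by omega) (s'.erase b)
          (by rw [Finset.card_erase_of_mem hb, hcs']; omega)]
      rw [Finset.sum_congr rfl hsum, Finset.sum_const, hcs', smul_eq_mul]
      rfl

end AuxAC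
namespace AuxAC
open List

variable {n : ℕ} {G : Type*}

lemma eggs_matching (hn : 2 ≤ n) (t : Term n) (ht : t.IsLinear) :
    t.eggs ∈ (matchings (Finset.univ : Finset (Fin n))).erase ∅ := by
  have hndt : t.leaves.Nodup := ht.nodup_iff.2 (List.nodup_finRange n)
  have hlent : t.leaves.length = n := ht.length_eq.trans List.length_finRange
  obtain ⟨t1, t2, rfl⟩ : ∃ a b, t = Term.mul a b := by
    cases t with
    | var i => exfalso; simp [Term.leaves] at hlent; omega
    | mul a b => exact ⟨a, b, rfl⟩
  set t := Term.mul t1 t2 with htdef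
  rw [Finset.mem_erase]
  constructor
  · rw [eggs_eq]
    intro hcon
    have hnil := eggL_ne_nil t t1 t2 rfl
    obtain ⟨e, he⟩ := List.exists_mem_of_ne_nil _ hnil
    have : e ∈ (eggL t).toFinset := List.mem_toFinset.2 he
    rw [hcon] at this
    exact Finset.notMem_empty e this
  · rw [mem_matchings]
    constructor
    · intro e he
      rw [eggs_eq, List.mem_toFinset] at he
      exact ⟨eggL_card t hndt e he, Finset.subset_univ e⟩
    · intro e he e' he' hne
      rw [eggs_eq, List.mem_toFinset] at he he'
      exact eggL_pairwise_disjoint t hndt e he e' he' hne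

lemma part2 (op : G → G → G) (hcomm : ∀ x y : G, op x y = op y x)
    (hid : ∀ w x y z : G, op (op (op w x) y) z = op (op (op w x) z) y)
    (hn : 2 ≤ n) : acSpec op n ≤ bell2 n - 1 := by
  classical
  set S := {f : (Fin n → G) → G | ∃ t : Term n, t.IsLinear ∧ f = fun h => t.eval op h} with hS
  set T := ((matchings (Finset.univ : Finset (Fin n))).erase ∅ : Finset (Finset (Finset (Fin n))))
  set F : ((Fin n → G) → G) → Finset (Finset (Fin n)) := fun f =>
    if hf : ∃ t : Term n, t.IsLinear ∧ f = fun h => t.eval op h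
    then (Classical.choose hf).eggs else ∅ with hF
  have hmaps : ∀ f ∈ S, F f ∈ (T : Set (Finset (Finset (Fin n)))) := by
    intro f hf
    have hf' : ∃ t : Term n, t.IsLinear ∧ f = fun h => t.eval op h := hf
    show (if hf : ∃ t : Term n, t.IsLinear ∧ f = fun h => t.eval op h
      then (Classical.choose hf).eggs else ∅) ∈ (T : Set (Finset (Finset (Fin n))))
    rw [dif_pos hf']
    exact Finset.mem_coe.2 (eggs_matching hn _ (Classical.choose_spec hf').1)
  have hinj : Set.InjOn F S := by
    intro f hf g hg hEq
    have hf' : ∃ t : Term n, t.IsLinear ∧ f = fun h => t.eval op h := hf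
    have hg' : ∃ t : Term n, t.IsLinear ∧ g = fun h => t.eval op h := hg
    have hEq' : (Classical.choose hf').eggs = (Classical.choose hg').eggs := by
      have : F f = F g := hEq
      rw [hF] at this
      simp only at this
      rwa [dif_pos hf', dif_pos hg'] at this
    obtain ⟨hlin1, hfe1⟩ := Classical.choose_spec hf'
    obtain ⟨hlin2, hfe2⟩ := Classical.choose_spec hg'
    rw [hfe1, hfe2]
    funext h
    exact part1 op hcomm hid hn _ _ hlin1 hlin2 hEq' h
  have hbound := Set.ncard_le_ncard_of_injOn F hmaps hinj (T.finite_toSet)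
  calc acSpec op n = S.ncard := rfl
    _ ≤ (T : Set (Finset (Finset (Fin n)))).ncard := hbound
    _ = T.card := Set.ncard_coe_finset T
    _ = (matchings (Finset.univ : Finset (Fin n))).card - 1 := by
        rw [Finset.card_erase_of_mem (mem_matchings.2 (empty_isMatching _))]
    _ = bell2 n - 1 := by
        rw [matchings_card n Finset.univ (by simp)]

end AuxAC

/-- For groupoids satisfying `xy ≈ yx` and `((wx)y)z ≈ ((wx)z)y`, full linear terms with the
same set of egg-pairs induce the same operation, whence the ac-spectrum is at most `B_{n,2} - 1`. -/
theorem spec_bound_eggs {G : Type*} (op : G → G → G)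
    (hcomm : ∀ x y : G, op x y = op y x)
    (hid : ∀ w x y z : G, op (op (op w x) y) z = op (op (op w x) z) y)
    (n : ℕ) (hn : 2 ≤ n) :
    (∀ s t : Term n, s.IsLinear → t.IsLinear → s.eggs = t.eggs →
      ∀ h : Fin n → G, s.eval op h = t.eval op h) ∧
    acSpec op n ≤ bell2 n - 1 := by
  constructor
  · intro s t hs ht he h
    exact AuxAC.part1 op hcomm hid hn s t hs ht he h
  · exact AuxAC.part2 op hcomm hid hn
end

section
/- Let (G,*) be a groupoid such that any two full linear terms s, t over x_1,…,x_n satisfying s and t have the same leftmost variable with left depths congruent modulo k induce the same operation (s^* = t^*). Then for all n ≥ k+1, the number of distinct operations induced by bracketings of x_1⋯x_n is at most k, and the number induced by full linear terms is at most k·n. -/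
lemma head?_leaves {n : ℕ} (t : Term n) : t.leaves.head? = some t.leftVar := by
  induction t with
  | var i => rfl
  | mul s t ihs iht => simp [Term.leaves, Term.leftVar, List.head?_append, ihs]

lemma linear_of_bracketing {n : ℕ} {t : Term n} (h : t.IsBracketing) : t.IsLinear := by
  rw [Term.IsLinear, h]

/-- If any two full linear terms with the same leftmost variable whose left depths are
congruent modulo `k` induce the same operation, then for `n ≥ k+1` the associative
spectrum is at most `k` and the ac-spectrum is at most `k·n`. -/
theorem spec_bounds_leftDepth_mod {G : Type*} (op : G → G → G) (k n : ℕ)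
    (hk : 1 ≤ k) (hn : k + 1 ≤ n)
    (hyp : ∀ s t : Term n, s.IsLinear → t.IsLinear → s.leftVar = t.leftVar →
      s.leftDepth ≡ t.leftDepth [MOD k] → ∀ h : Fin n → G, s.eval op h = t.eval op h) :
    assocSpec op n ≤ k ∧ acSpec op n ≤ k * n := by
  classical
  have hk0 : 0 < k := hk
  have key : ∀ s t : Term n, s.IsLinear → t.IsLinear → s.leftVar = t.leftVar →
      s.leftDepth % k = t.leftDepth % k →
      (fun h => s.eval op h) = (fun h => t.eval op h) := by
    intro s t hs ht hv hd
    funext h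
    exact hyp s t hs ht hv hd h
  constructor
  · rw [assocSpec, ← Nat.card_coe_set_eq]
    have : Nat.card {f : (Fin n → G) → G |
        ∃ t : Term n, t.IsBracketing ∧ f = fun h => t.eval op h} ≤ Nat.card (Fin k) := by
      apply Nat.card_le_card_of_injective
        (fun x => (⟨x.2.choose.leftDepth % k, Nat.mod_lt _ hk0⟩ : Fin k))
      intro x y hxy
      simp only [Fin.mk.injEq] at hxy
      obtain ⟨hbx, hfx⟩ := x.2.choose_spec
      obtain ⟨hby, hfy⟩ := y.2.choose_spec
      have hv : x.2.choose.leftVar = y.2.choose.leftVar := by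
        have h1 := head?_leaves x.2.choose
        have h2 := head?_leaves y.2.choose
        rw [hbx] at h1; rw [hby] at h2
        rw [h1] at h2
        exact Option.some.inj h2
      have := key _ _ (linear_of_bracketing hbx) (linear_of_bracketing hby) hv hxy
      exact Subtype.ext (by rw [hfx, hfy, this])
    simpa using this
  · rw [acSpec, ← Nat.card_coe_set_eq]
    have : Nat.card {f : (Fin n → G) → G |
        ∃ t : Term n, t.IsLinear ∧ f = fun h => t.eval op h} ≤ Nat.card (Fin k × Fin n) := by
      apply Nat.card_le_card_of_injective
        (fun x => ((⟨x.2.choose.leftDepth % k, Nat.mod_lt _ hk0⟩ : Fin k),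
          x.2.choose.leftVar))
      intro x y hxy
      simp only [Prod.mk.injEq, Fin.mk.injEq] at hxy
      obtain ⟨hbx, hfx⟩ := x.2.choose_spec
      obtain ⟨hby, hfy⟩ := y.2.choose_spec
      have := key _ _ hbx hby hxy.2 hxy.1
      exact Subtype.ext (by rw [hfx, hfy, this])
    simpa [mul_comm] using this
end
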